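/- arXiv:2303.07834 — 2 statements merged into one kernel-verified Lean document; each statement's English description precedes it below -/
import Mathlib

section
/- For every augmented policy η ∈ Π̄, the occupation measure w_η satisfies the bilinear constraints: for all 0 ≤ t ≤ T-1, x ∈ 𝒳, z ∈ 𝒵 and a ∈ 𝒜, (w_η)_t((x,z),a) · Σ_{a'} (w_η)_t((x,𝟏),a') = (w_η)_t((x,𝟏),a) · Σ_{a'} (w_η)_t((x,z),a'). -/
open Finset

/-- The augmented binary component space `𝒵 = {0,1}^{K+1}`. -/
abbrev ZVec (K : ℕ) := Fin (K + 1) → Fin 2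

/-- The all-ones vector `𝟏 ∈ 𝒵`. -/
def oneVec (K : ℕ) : ZVec K := fun _ => 1

/-- `ρ`-factor: `c ^ (z_i * z'_i) * (1 - c) ^ (z_i * (1 - z'_i))` (with `c ^ 0 = 1`). -/
noncomputable def rho (c : ℝ) (zi zi' : Fin 2) : ℝ :=
  c ^ ((zi : ℕ) * (zi' : ℕ)) * (1 - c) ^ ((zi : ℕ) * (1 - (zi' : ℕ)))

/-- Augmented transition function `Q̄_t((x',z') | (x,z), a)`. -/
noncomputable def Qbar {X A : Type*} (K : ℕ)
    (Q : X → A → X → ℝ) (f : ℕ → Fin (K + 1) → X → A → X → ℝ)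
    (t : ℕ) (x : X) (z : ZVec K) (a : A) (x' : X) (z' : ZVec K) : ℝ :=
  if ∃ i, z i = 0 ∧ z' i = 1 then 0
  else Q x a x' * ∏ i, rho (f (t - 1) i x a x') (z i) (z' i)

/-- Probability of the trajectory `(x_0, a_0, …, x_T)` under the Markov randomized policy
`d = (d_t)_{t<T}` starting at `s`. -/
noncomputable def trajProb {X A : Type*} [DecidableEq X]
    (T : ℕ) (Q : X → A → X → ℝ) (d : Fin T → X → A → ℝ) (s : X)
    (xs : Fin (T + 1) → X) (as : Fin T → A) : ℝ :=
  (if xs 0 = s then 1 else 0) *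
    ∏ t : Fin T, d t (xs t.castSucc) (as t) * Q (xs t.castSucc) (as t) (xs t.succ)

/-- Probability of the augmented trajectory `((x_0,z_0), a_0, …, (x_T,z_T))` under the
augmented policy `dbar` starting at `(s, 𝟏)`, with kernels `Q̄_{t+1}` at step `t`. -/
noncomputable def trajProbBar {X A : Type*} [DecidableEq X]
    (T K : ℕ) (Q : X → A → X → ℝ) (f : ℕ → Fin (K + 1) → X → A → X → ℝ)
    (dbar : Fin T → X × ZVec K → A → ℝ) (s : X)
    (xzs : Fin (T + 1) → X × ZVec K) (as : Fin T → A) : ℝ :=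
  (if xzs 0 = (s, oneVec K) then 1 else 0) *
    ∏ t : Fin T, dbar t (xzs t.castSucc) (as t) *
      Qbar K Q f ((t : ℕ) + 1) (xzs t.castSucc).1 (xzs t.castSucc).2 (as t)
        (xzs t.succ).1 (xzs t.succ).2

/-- `P^π_s(X_t = x, A_t = a)`, the marginal of the trajectory measure in the original model. -/
noncomputable def Pmarg {X A : Type*} [Fintype X] [Fintype A] [DecidableEq X] [DecidableEq A]
    (T : ℕ) (Q : X → A → X → ℝ) (d : Fin T → X → A → ℝ) (s : X)
    (t : Fin T) (x : X) (a : A) : ℝ :=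
  ∑ xs : Fin (T + 1) → X, ∑ as : Fin T → A,
    if xs t.castSucc = x ∧ as t = a then trajProb T Q d s xs as else 0

/-- `P^η_{(s,𝟏)}(X_t = x, Z_t = z, A_t = a)`, the marginal (occupation measure for `t < T`)
in the augmented model. -/
noncomputable def PmargBar {X A : Type*} [Fintype X] [Fintype A] [DecidableEq X] [DecidableEq A]
    (T K : ℕ) (Q : X → A → X → ℝ) (f : ℕ → Fin (K + 1) → X → A → X → ℝ)
    (dbar : Fin T → X × ZVec K → A → ℝ) (s : X)
    (t : Fin T) (xz : X × ZVec K) (a : A) : ℝ :=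
  ∑ xzs : Fin (T + 1) → X × ZVec K, ∑ as : Fin T → A,
    if xzs t.castSucc = xz ∧ as t = a then trajProbBar T K Q f dbar s xzs as else 0

/-- `P^η_{(s,𝟏)}(X_T = x, Z_T = z)`, the terminal marginal in the augmented model. -/
noncomputable def PmargBarT {X A : Type*} [Fintype X] [Fintype A] [DecidableEq X] [DecidableEq A]
    (T K : ℕ) (Q : X → A → X → ℝ) (f : ℕ → Fin (K + 1) → X → A → X → ℝ)
    (dbar : Fin T → X × ZVec K → A → ℝ) (s : X) (xz : X × ZVec K) : ℝ :=
  ∑ xzs : Fin (T + 1) → X × ZVec K, ∑ as : Fin T → A,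
    if xzs (Fin.last T) = xz then trajProbBar T K Q f dbar s xzs as else 0

/-- `d` is a Markov randomized policy: each `d_t(·|x)` is a probability distribution on `A`. -/
def IsMR {S A : Type*} [Fintype A] {T : ℕ} (d : Fin T → S → A → ℝ) : Prop :=
  ∀ (t : Fin T) (x : S), (∀ a : A, 0 ≤ d t x a) ∧ ∑ a : A, d t x a = 1

/-- An augmented policy is indifferent to the augmented component `z`. -/
def Indiff {X A : Type*} {T K : ℕ} (dbar : Fin T → X × ZVec K → A → ℝ) : Prop :=
  ∀ (t : Fin T) (x : X) (z : ZVec K) (a : A), dbar t (x, z) a = dbar t (x, oneVec K) a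

/-- The projection `Γ` of an augmented policy to a policy of the original model. -/
def Gamma {X A : Type*} {T K : ℕ} (dbar : Fin T → X × ZVec K → A → ℝ) :
    Fin T → X → A → ℝ := fun t x a => dbar t (x, oneVec K) a

/-- Stage-wise cost `r̄_{t,i}((x,z),a) = Σ_{x'} r_{t,i}(x,a,x') Q(x'|x,a)` of the augmented
model (it does not depend on `z`). -/
noncomputable def rbar {X A : Type*} [Fintype X] {K : ℕ}
    (Q : X → A → X → ℝ) (r : ℕ → Fin (K + 1) → X → A → X → ℝ)
    (t : ℕ) (i : Fin (K + 1)) (x : X) (a : A) : ℝ :=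
  ∑ x' : X, r t i x a x' * Q x a x'

/-- Combined additive-plus-multiplicative cost
`w^π_i(s) = E^π_s[Σ_t r_{t,i}(X_t,A_t,X_{t+1}) + α_i ∏_t f_{t,i}(X_t,A_t,X_{t+1})]`. -/
noncomputable def wcost {X A : Type*} [Fintype X] [Fintype A] [DecidableEq X] {K : ℕ}
    (T : ℕ) (Q : X → A → X → ℝ)
    (r f : ℕ → Fin (K + 1) → X → A → X → ℝ) (α : Fin (K + 1) → ℝ)
    (d : Fin T → X → A → ℝ) (s : X) (i : Fin (K + 1)) : ℝ :=
  ∑ xs : Fin (T + 1) → X, ∑ as : Fin T → A,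
    trajProb T Q d s xs as *
      ((∑ t : Fin T, r t i (xs t.castSucc) (as t) (xs t.succ)) +
        α i * ∏ t : Fin T, f t i (xs t.castSucc) (as t) (xs t.succ))

/-- Total expected cost in the augmented model
`w̄^η_i(s,𝟏) = E^η_{(s,𝟏)}[Σ_t r̄_{t,i}((X_t,Z_t),A_t) + α_i Z_{T,i}]`. -/
noncomputable def wbarcost {X A : Type*} [Fintype X] [Fintype A] [DecidableEq X]
    (T K : ℕ) (Q : X → A → X → ℝ)
    (f r : ℕ → Fin (K + 1) → X → A → X → ℝ) (α : Fin (K + 1) → ℝ)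
    (dbar : Fin T → X × ZVec K → A → ℝ) (s : X) (i : Fin (K + 1)) : ℝ :=
  ∑ xzs : Fin (T + 1) → X × ZVec K, ∑ as : Fin T → A,
    trajProbBar T K Q f dbar s xzs as *
      ((∑ t : Fin T, rbar Q r t i (xzs t.castSucc).1 (as t)) +
        α i * (((xzs (Fin.last T)).2 i : ℕ) : ℝ))

/-- The BLP linear functional: `Σ_{t<T} Σ_{(x,z),a} r̄_{t,i}((x,z),a) w_t((x,z),a)
+ Σ_{(x,z)} α_i z_i w_T(x,z)`. -/
noncomputable def BLPlin {X A : Type*} [Fintype X] [Fintype A] (T K : ℕ)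
    (Q : X → A → X → ℝ) (r : ℕ → Fin (K + 1) → X → A → X → ℝ) (α : Fin (K + 1) → ℝ)
    (i : Fin (K + 1)) (w : Fin T → X × ZVec K → A → ℝ) (wT : X × ZVec K → ℝ) : ℝ :=
  (∑ t : Fin T, ∑ xz : X × ZVec K, ∑ a : A, rbar Q r t i xz.1 a * w t xz a) +
    ∑ xz : X × ZVec K, α i * (((xz.2 i : ℕ)) : ℝ) * wT xz

/-- The feasible region `𝒬` of the bilinear program. -/
def BLPFeasible {X A : Type*} [Fintype X] [Fintype A] [DecidableEq X] (T K : ℕ) (hT : 1 ≤ T)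
    (Q : X → A → X → ℝ) (f r : ℕ → Fin (K + 1) → X → A → X → ℝ)
    (α b : Fin (K + 1) → ℝ) (s : X)
    (w : Fin T → X × ZVec K → A → ℝ) (wT : X × ZVec K → ℝ) : Prop :=
  (∀ (t : Fin T) (xz : X × ZVec K) (a : A), 0 ≤ w t xz a) ∧
  (∀ xz : X × ZVec K, 0 ≤ wT xz) ∧
  (∀ xz : X × ZVec K,
    ∑ a : A, w ⟨0, hT⟩ xz a = if xz = (s, oneVec K) then 1 else 0) ∧
  (∀ t : Fin T, 1 ≤ (t : ℕ) → ∀ xz : X × ZVec K,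
    ∑ a : A, w t xz a =
      ∑ xz' : X × ZVec K, ∑ a : A, Qbar K Q f t xz'.1 xz'.2 a xz.1 xz.2 *
        w ⟨(t : ℕ) - 1, lt_of_le_of_lt (Nat.sub_le _ _) t.isLt⟩ xz' a) ∧
  (∀ xz : X × ZVec K,
    wT xz = ∑ xz' : X × ZVec K, ∑ a : A, Qbar K Q f T xz'.1 xz'.2 a xz.1 xz.2 *
      w ⟨T - 1, by omega⟩ xz' a) ∧
  (∀ i : Fin (K + 1), 1 ≤ (i : ℕ) → BLPlin T K Q r α i w wT ≤ b i) ∧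
  (∀ (t : Fin T) (x : X) (z : ZVec K) (a : A),
    w t (x, z) a * (∑ a' : A, w t (x, oneVec K) a') =
      w t (x, oneVec K) a * (∑ a' : A, w t (x, z) a'))

section machinery

variable {S : Type*} [Fintype S] [DecidableEq S]

set_option linter.unusedSectionVars false

noncomputable def nuGen (F : ℕ → S → S → ℝ) (h : S → ℝ) : ℕ → S → ℝ
  | 0 => h
  | (k+1) => fun p' => ∑ p, nuGen F h k p * F k p p'

lemma nuGen_shift (F : ℕ → S → S → ℝ) (h : S → ℝ) (k : ℕ) :
    nuGen (fun m => F (m+1)) (fun q => ∑ p, h p * F 0 p q) k = nuGen F h (k+1) := by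
  induction k with
  | zero => rfl
  | succ k ih => funext p'; simp only [nuGen, ih]

lemma nuGen_congr (F F' : ℕ → S → S → ℝ) (h : S → ℝ) (k : ℕ)
    (hagree : ∀ m, m < k → F m = F' m) : nuGen F h k = nuGen F' h k := by
  induction k with
  | zero => rfl
  | succ k ih =>
      funext p'
      simp only [nuGen, ih (fun m hm => hagree m (hm.trans (Nat.lt_succ_self k))),
        hagree k (Nat.lt_succ_self k)]

lemma nuGen_mass (F : ℕ → S → S → ℝ) (h : S → ℝ) (k : ℕ)
    (hF : ∀ p, ∑ p', F k p p' = 1) :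
    ∑ p', nuGen F h (k+1) p' = ∑ p, nuGen F h k p := by
  simp only [nuGen]
  rw [Finset.sum_comm]
  simp [← Finset.mul_sum, hF]

lemma path_sum (F : ℕ → S → S → ℝ) (h g : S → ℝ) (n : ℕ) :
    ∑ xs : Fin (n+1) → S,
      (h (xs 0) * ∏ u : Fin n, F u (xs u.castSucc) (xs u.succ)) * g (xs (Fin.last n))
      = ∑ p, nuGen F h n p * g p := by
  induction n generalizing F h with
  | zero =>
      rw [← (Equiv.funUnique (Fin 1) S).symm.sum_comp]
      simp [nuGen]
  | succ n ih =>
      rw [← (Fin.consEquiv (fun _ : Fin (n+2) => S)).sum_comp]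
      rw [Fintype.sum_prod_type]
      have step : ∀ (p : S) (ys : Fin (n+1) → S),
          (h ((Fin.cons p ys : Fin (n+2) → S) 0) *
            ∏ u : Fin (n+1), F u ((Fin.cons p ys : Fin (n+2) → S) u.castSucc)
              ((Fin.cons p ys : Fin (n+2) → S) u.succ)) *
            g ((Fin.cons p ys : Fin (n+2) → S) (Fin.last (n+1)))
          = ((h p * F 0 p (ys 0)) *
              ∏ u : Fin n, F (u+1) (ys u.castSucc) (ys u.succ)) * g (ys (Fin.last n)) := by
        intro p ys
        have e1 : (1 : Fin (n+2)) = Fin.succ 0 := rfl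
        have hlast : (Fin.last (n+1)) = (Fin.last n).succ := by simp [Fin.ext_iff]
        simp only [Fin.prod_univ_succ, Fin.castSucc_zero, Fin.cons_zero, e1, hlast,
          ← Fin.succ_castSucc, Fin.cons_succ, Fin.val_succ, Fin.val_zero]
        ring
      simp only [Fin.consEquiv_apply]
      simp only [step]
      rw [Finset.sum_comm]
      have inner : ∀ ys : Fin (n+1) → S,
          ∑ p, ((h p * F 0 p (ys 0)) *
              ∏ u : Fin n, F (u+1) (ys u.castSucc) (ys u.succ)) * g (ys (Fin.last n))
          = ((∑ p, h p * F 0 p (ys 0)) *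
              ∏ u : Fin n, F (u+1) (ys u.castSucc) (ys u.succ)) * g (ys (Fin.last n)) := by
        intro ys; rw [Finset.sum_mul, Finset.sum_mul]
      simp only [inner]
      have key := ih (fun m => F (m+1)) (fun q => ∑ p, h p * F 0 p q)
      rw [key]
      simp only [nuGen_shift]

end machinery

lemma qbar_sum {X A : Type*} [Fintype X] (K : ℕ) (Q : X → A → X → ℝ)
    (hQsum : ∀ x a, ∑ x' : X, Q x a x' = 1) (f : ℕ → Fin (K + 1) → X → A → X → ℝ)
    (t : ℕ) (x : X) (z : ZVec K) (a : A) :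
    ∑ p' : X × ZVec K, Qbar K Q f t x z a p'.1 p'.2 = 1 := by
  rw [Fintype.sum_prod_type]
  have hx : ∀ x' : X, ∑ z' : ZVec K, Qbar K Q f t x z a x' z' = Q x a x' := by
    intro x'
    set c := fun i : Fin (K+1) => f (t-1) i x a x' with hc
    have hrw : ∀ z' : ZVec K, Qbar K Q f t x z a x' z' =
        Q x a x' * ∏ i, (if z i = 0 ∧ z' i = 1 then 0 else rho (c i) (z i) (z' i)) := by
      intro z'
      unfold Qbar
      by_cases hbad : ∃ i, z i = 0 ∧ z' i = 1
      · rw [if_pos hbad]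
        obtain ⟨i, hi⟩ := hbad
        rw [Finset.prod_eq_zero (Finset.mem_univ i) (by simp [hi])]
        ring
      · rw [if_neg hbad]
        congr 1
        refine Finset.prod_congr rfl fun i _ => ?_
        rw [if_neg (fun h => hbad ⟨i, h⟩)]
    rw [Finset.sum_congr rfl fun z' _ => hrw z', ← Finset.mul_sum,
      ← Fintype.prod_sum (fun (i : Fin (K+1)) (b : Fin 2) =>
        if z i = 0 ∧ b = 1 then 0 else rho (c i) (z i) b)]
    have hone : ∀ i : Fin (K+1),
        (∑ b : Fin 2, if z i = 0 ∧ b = 1 then 0 else rho (c i) (z i) b) = 1 := by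
      intro i
      have h2 : z i = 0 ∨ z i = 1 := by
        have hlt := (z i).isLt
        have : (z i).val = 0 ∨ (z i).val = 1 := by omega
        rcases this with h | h
        · exact Or.inl (Fin.ext h)
        · exact Or.inr (Fin.ext h)
      rw [Fin.sum_univ_two]
      rcases h2 with h | h <;> simp [h, rho]
    rw [Finset.prod_congr rfl fun i _ => hone i]
    simp
  rw [Finset.sum_congr rfl fun x' _ => hx x', hQsum]

/-- The "action-summed-out" free transition kernel of the augmented chain. -/
noncomputable def freeKer {X A : Type*} [Fintype A] (T K : ℕ) (Q : X → A → X → ℝ)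
    (f : ℕ → Fin (K + 1) → X → A → X → ℝ) (dbar : Fin T → X × ZVec K → A → ℝ) :
    ℕ → (X × ZVec K) → (X × ZVec K) → ℝ :=
  fun u p p' => ∑ b : A, (if h : u < T then dbar ⟨u, h⟩ p b else 0) *
    Qbar K Q f (u + 1) p.1 p.2 b p'.1 p'.2

/-- The kernel with the action and state selected at time `t`. -/
noncomputable def selKer {X A : Type*} [Fintype A] [DecidableEq X] [DecidableEq A]
    (T K : ℕ) (Q : X → A → X → ℝ)
    (f : ℕ → Fin (K + 1) → X → A → X → ℝ) (dbar : Fin T → X × ZVec K → A → ℝ)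
    (t : Fin T) (xz : X × ZVec K) (a : A) :
    ℕ → (X × ZVec K) → (X × ZVec K) → ℝ :=
  fun u p p' =>
    if u = (t : ℕ) then
      (if p = xz then dbar t xz a * Qbar K Q f ((t : ℕ) + 1) xz.1 xz.2 a p'.1 p'.2 else 0)
    else freeKer T K Q f dbar u p p'

lemma pmargBar_factor {X A : Type*} [Fintype X] [Fintype A] [DecidableEq X] [DecidableEq A]
    (T K : ℕ) (Q : X → A → X → ℝ) (hQsum : ∀ x a, ∑ x' : X, Q x a x' = 1)
    (f : ℕ → Fin (K + 1) → X → A → X → ℝ) (s : X)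
    (dbar : Fin T → X × ZVec K → A → ℝ) (hmr : IsMR dbar)
    (t : Fin T) (xz : X × ZVec K) (a : A) :
    PmargBar T K Q f dbar s t xz a =
      dbar t xz a *
        nuGen (freeKer T K Q f dbar)
          (fun p => if p = (s, oneVec K) then 1 else 0) (t : ℕ) xz := by
  classical
  set δ : X × ZVec K → ℝ := fun p => if p = (s, oneVec K) then 1 else 0 with hδ
  set Kf := freeKer T K Q f dbar with hKf
  set Gn := selKer T K Q f dbar t xz a with hGn
  -- Step A: PmargBar equals the path sum with kernel Gn
  have hA1 : ∀ xzs : Fin (T+1) → X × ZVec K,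
      (∑ as : Fin T → A,
        if xzs t.castSucc = xz ∧ as t = a then trajProbBar T K Q f dbar s xzs as else 0)
      = δ (xzs 0) * ∏ u : Fin T, Gn (u : ℕ) (xzs u.castSucc) (xzs u.succ) := by
    intro xzs
    set H : Fin T → A → ℝ := fun u b =>
      if u = t then
        (if xzs t.castSucc = xz ∧ b = a then
          dbar t (xzs u.castSucc) b *
            Qbar K Q f ((u : ℕ) + 1) (xzs u.castSucc).1 (xzs u.castSucc).2 b
              (xzs u.succ).1 (xzs u.succ).2 else 0)
      else dbar u (xzs u.castSucc) b *
        Qbar K Q f ((u : ℕ) + 1) (xzs u.castSucc).1 (xzs u.castSucc).2 b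
          (xzs u.succ).1 (xzs u.succ).2 with hH
    have hpt : ∀ as : Fin T → A,
        (if xzs t.castSucc = xz ∧ as t = a then trajProbBar T K Q f dbar s xzs as else 0)
        = δ (xzs 0) * ∏ u : Fin T, H u (as u) := by
      intro as
      by_cases hcond : xzs t.castSucc = xz ∧ as t = a
      · rw [if_pos hcond]
        unfold trajProbBar
        congr 1
        refine Finset.prod_congr rfl fun u _ => ?_
        by_cases hu : u = t
        · subst hu
          simp only [hH, if_pos rfl, if_pos hcond]
        · simp only [hH, if_neg hu]
      · rw [if_neg hcond]
        rw [Finset.prod_eq_zero (Finset.mem_univ t) (by simp [hH, hcond]), mul_zero]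
    rw [Finset.sum_congr rfl fun as _ => hpt as, ← Finset.mul_sum,
      ← Fintype.prod_sum (fun (u : Fin T) (b : A) => H u b)]
    congr 1
    refine Finset.prod_congr rfl fun u _ => ?_
    by_cases hu : u = t
    · subst hu
      by_cases hx : xzs u.castSucc = xz
      · simp only [hH, if_pos rfl, hx, true_and, hGn, selKer, if_pos rfl]
        simp [Finset.sum_ite_eq']
      · simp [hH, hx, hGn, selKer]
    · have huv : (u : ℕ) ≠ (t : ℕ) := fun h => hu (Fin.ext h)
      simp only [hH, if_neg hu, hGn, selKer, if_neg huv, hKf, freeKer, dif_pos u.isLt,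
        Fin.eta]
  have hA : PmargBar T K Q f dbar s t xz a = ∑ p, nuGen Gn δ T p := by
    unfold PmargBar
    rw [Finset.sum_congr rfl fun xzs _ => hA1 xzs]
    have := path_sum Gn δ (fun _ => 1) T
    simp only [mul_one] at this
    rw [← this]
  -- Step B: evaluate the path sum
  have hkk_sum : ∀ (u : ℕ) (p : X × ZVec K) (b : A),
      ∑ p' : X × ZVec K, Qbar K Q f (u + 1) p.1 p.2 b p'.1 p'.2 = 1 :=
    fun u p b => qbar_sum K Q hQsum f (u+1) p.1 p.2 b
  have hKf_sum : ∀ u, u < T → ∀ p, ∑ p', Kf u p p' = 1 := by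
    intro u hu p
    simp only [hKf, freeKer, dif_pos hu]
    rw [Finset.sum_comm]
    calc ∑ b : A, ∑ p' : X × ZVec K,
          dbar ⟨u, hu⟩ p b * Qbar K Q f (u + 1) p.1 p.2 b p'.1 p'.2
        = ∑ b : A, dbar ⟨u, hu⟩ p b *
            ∑ p' : X × ZVec K, Qbar K Q f (u + 1) p.1 p.2 b p'.1 p'.2 := by
          refine Finset.sum_congr rfl fun b _ => ?_; rw [Finset.mul_sum]
      _ = ∑ b : A, dbar ⟨u, hu⟩ p b := by
          refine Finset.sum_congr rfl fun b _ => ?_; rw [hkk_sum u p b, mul_one]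
      _ = 1 := (hmr ⟨u, hu⟩ p).2
  have hagree : nuGen Gn δ (t : ℕ) = nuGen Kf δ (t : ℕ) := by
    refine nuGen_congr _ _ _ _ fun m hm => ?_
    funext p p'
    simp only [hGn, selKer, if_neg (Nat.ne_of_lt hm), hKf]
  have hstep1 : ∑ p', nuGen Gn δ ((t : ℕ) + 1) p' =
      dbar t xz a * nuGen Kf δ (t : ℕ) xz := by
    have hval : ∀ p', nuGen Gn δ ((t : ℕ) + 1) p' =
        nuGen Kf δ (t : ℕ) xz *
          (dbar t xz a * Qbar K Q f ((t : ℕ) + 1) xz.1 xz.2 a p'.1 p'.2) := by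
      intro p'
      show (∑ p, nuGen Gn δ (t : ℕ) p * Gn (t : ℕ) p p') = _
      rw [hagree]
      have : ∀ p, nuGen Kf δ (t : ℕ) p * Gn (t : ℕ) p p' =
          if p = xz then nuGen Kf δ (t : ℕ) p *
            (dbar t xz a * Qbar K Q f ((t : ℕ) + 1) xz.1 xz.2 a p'.1 p'.2) else 0 := by
        intro p
        simp only [hGn, selKer, if_pos rfl]
        by_cases hp : p = xz <;> simp [hp]
      rw [Finset.sum_congr rfl fun p _ => this p,
        Finset.sum_ite_eq' Finset.univ xz, if_pos (Finset.mem_univ xz)]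
    rw [Finset.sum_congr rfl fun p' _ => hval p', ← Finset.mul_sum]
    have : ∑ p' : X × ZVec K,
        dbar t xz a * Qbar K Q f ((t : ℕ) + 1) xz.1 xz.2 a p'.1 p'.2
        = dbar t xz a := by
      rw [← Finset.mul_sum, hkk_sum (t : ℕ) xz a, mul_one]
    rw [this]; ring
  have hmassT : ∀ m, (t : ℕ) + 1 ≤ m → m ≤ T →
      ∑ p, nuGen Gn δ m p = dbar t xz a * nuGen Kf δ (t : ℕ) xz := by
    intro m hm
    induction m, hm using Nat.le_induction with
    | base => intro _; exact hstep1
    | succ m hm ih =>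
        intro hmT
        have hmlt : m < T := by omega
        rw [nuGen_mass Gn δ m (fun p => ?_)]
        · exact ih (by omega)
        · have hne : m ≠ (t : ℕ) := by omega
          simp only [hGn, selKer, if_neg hne]
          exact hKf_sum m hmlt p
  rw [hA, hmassT T (by exact t.isLt) le_rfl]

/-- For every `η ∈ Π̄`, its occupation measure satisfies the bilinear constraints:
`w_t((x,z),a) Σ_{a'} w_t((x,𝟏),a') = w_t((x,𝟏),a) Σ_{a'} w_t((x,z),a')`. -/
theorem occupation_satisfies_bilinear {X A : Type*}
    [Fintype X] [Fintype A] [Nonempty X] [Nonempty A]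
    [DecidableEq X] [DecidableEq A]
    (T K : ℕ) (hT : 1 ≤ T)
    (Q : X → A → X → ℝ)
    (hQnn : ∀ x a x', 0 ≤ Q x a x') (hQle : ∀ x a x', Q x a x' ≤ 1)
    (hQsum : ∀ x a, ∑ x' : X, Q x a x' = 1)
    (f : ℕ → Fin (K + 1) → X → A → X → ℝ)
    (hf : ∀ t, t ≤ T - 1 → ∀ i x a x', 0 ≤ f t i x a x' ∧ f t i x a x' ≤ 1)
    (s : X)
    (dbar : Fin T → X × ZVec K → A → ℝ)
    (hmr : IsMR dbar) (hind : Indiff dbar)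
    (t : Fin T) (x : X) (z : ZVec K) (a : A) :
    PmargBar T K Q f dbar s t (x, z) a *
        (∑ a' : A, PmargBar T K Q f dbar s t (x, oneVec K) a') =
      PmargBar T K Q f dbar s t (x, oneVec K) a *
        (∑ a' : A, PmargBar T K Q f dbar s t (x, z) a') := by
  have key : ∀ (z' : ZVec K) (a' : A),
      PmargBar T K Q f dbar s t (x, z') a' =
        dbar t (x, oneVec K) a' *
          nuGen (freeKer T K Q f dbar)
            (fun p => if p = (s, oneVec K) then 1 else 0) (t : ℕ) (x, z') := by
    intro z' a'
    rw [pmargBar_factor T K Q hQsum f s dbar hmr t (x, z') a', hind t x z' a']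
  simp only [key]
  rw [← Finset.sum_mul, ← Finset.sum_mul]
  ring
end

section
/- Let w* be a minimizer of the BLP objective B over the feasible region 𝒬, and assume Σ_{a'} w*_t((x,𝟏),a') > 0 for all 0 ≤ t ≤ T-1 and x ∈ 𝒳. Define the policy π* = (d*_t)_{t=0}^{T-1} ∈ Π_MR by d*_t(a|x) := w*_t((x,𝟏),a) / Σ_{a'} w*_t((x,𝟏),a'). Then π* is an optimizer of the original constrained problem (P): it satisfies w^{π*}_i(s) ≤ b_i for all 1 ≤ i ≤ K, and w^{π*}_0(s) ≤ w^π_0(s) for every π ∈ Π_MR satisfying w^π_i(s) ≤ b_i for all 1 ≤ i ≤ K. -/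
set_option linter.unusedSectionVars false

open Finset

lemma swap12 {α β : Type*} [Fintype α] [Fintype β] (F : α → β → ℝ) :
    ∑ a : α, ∑ b : β, F a b = ∑ b : β, ∑ a : α, F a b := Finset.sum_comm

lemma sum4_swap {α β γ δ : Type*} [Fintype α] [Fintype β] [Fintype γ] [Fintype δ]
    (F : α → β → γ → δ → ℝ) :
    ∑ a : α, ∑ b : β, ∑ c : γ, ∑ d : δ, F a b c d
      = ∑ c : γ, ∑ d : δ, ∑ a : α, ∑ b : β, F a b c d := by
  calc ∑ a : α, ∑ b : β, ∑ c : γ, ∑ d : δ, F a b c d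
      = ∑ a : α, ∑ c : γ, ∑ b : β, ∑ d : δ, F a b c d :=
        Finset.sum_congr rfl fun a _ => swap12 _
    _ = ∑ c : γ, ∑ a : α, ∑ b : β, ∑ d : δ, F a b c d := swap12 _
    _ = ∑ c : γ, ∑ a : α, ∑ d : δ, ∑ b : β, F a b c d :=
        Finset.sum_congr rfl fun c _ => Finset.sum_congr rfl fun a _ => swap12 _
    _ = ∑ c : γ, ∑ d : δ, ∑ a : α, ∑ b : β, F a b c d :=
        Finset.sum_congr rfl fun c _ => swap12 _

section Generic
variable {S A : Type*} [Fintype S] [Fintype A] [DecidableEq S]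

/-- Trajectory weight for a combined kernel `k t x a x'`. -/
noncomputable def traj (T : ℕ) (k : ℕ → S → A → S → ℝ) (s0 : S)
    (xs : Fin (T + 1) → S) (as : Fin T → A) : ℝ :=
  (if xs 0 = s0 then 1 else 0) * ∏ t : Fin T, k t (xs t.castSucc) (as t) (xs t.succ)

/-- Forward state marginal. -/
noncomputable def nuM (k : ℕ → S → A → S → ℝ) (s0 : S) : ℕ → S → ℝ
  | 0 => fun x => if x = s0 then 1 else 0
  | (t+1) => fun x' => ∑ x : S, ∑ a : A, nuM k s0 t x * k t x a x'

lemma nuM_shift (k : ℕ → S → A → S → ℝ) (s0 : S) (t : ℕ) (x' : S) :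
    nuM k s0 (t+1) x' = ∑ a : A, ∑ x1 : S, k 0 s0 a x1 * nuM (fun n => k (n+1)) x1 t x' := by
  induction t generalizing x' with
  | zero =>
    simp only [nuM]
    rw [Finset.sum_comm]
    refine Finset.sum_congr rfl fun a _ => ?_
    simp [ite_mul, mul_ite, Finset.sum_ite_eq, Finset.sum_ite_eq']
  | succ t ih =>
    show (∑ x : S, ∑ a : A, nuM k s0 (t+1) x * k (t+1) x a x') = _
    calc (∑ x : S, ∑ a : A, nuM k s0 (t+1) x * k (t+1) x a x')
        = ∑ x : S, ∑ a : A, ∑ a0 : A, ∑ x1 : S,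
            k 0 s0 a0 x1 * (nuM (fun n => k (n+1)) x1 t x * k (t+1) x a x') := by
          refine Finset.sum_congr rfl fun x _ => Finset.sum_congr rfl fun a _ => ?_
          rw [ih x, Finset.sum_mul]
          exact Finset.sum_congr rfl fun a0 _ => by
            rw [Finset.sum_mul]; exact Finset.sum_congr rfl fun x1 _ => by ring
      _ = ∑ a0 : A, ∑ x1 : S, ∑ x : S, ∑ a : A,
            k 0 s0 a0 x1 * (nuM (fun n => k (n+1)) x1 t x * k (t+1) x a x') := sum4_swap _
      _ = ∑ a0 : A, ∑ x1 : S, k 0 s0 a0 x1 * nuM (fun n => k (n+1)) x1 (t+1) x' := by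
          refine Finset.sum_congr rfl fun a0 _ => Finset.sum_congr rfl fun x1 _ => ?_
          show _ = k 0 s0 a0 x1 * ∑ x : S, ∑ a : A, nuM (fun n => k (n+1)) x1 t x * k (t+1) x a x'
          rw [Finset.mul_sum]
          exact Finset.sum_congr rfl fun x _ => by rw [Finset.mul_sum]

/-- Sum over tuples via cons decomposition. -/
lemma sum_pi_succ {β : Type*} [Fintype β] (n : ℕ) (h : (Fin (n + 1) → β) → ℝ) :
    ∑ xs : Fin (n + 1) → β, h xs = ∑ x0 : β, ∑ xs' : Fin n → β, h (Fin.cons x0 xs') := by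
  rw [← (Fin.consEquiv (fun _ => β)).sum_comp h, Fintype.sum_prod_type]
  rfl

lemma traj_cons (T : ℕ) (k : ℕ → S → A → S → ℝ) (s0 : S)
    (x0 : S) (xs' : Fin (T + 1) → S) (a0 : A) (as' : Fin T → A) :
    traj (T+1) k s0 (Fin.cons x0 xs') (Fin.cons a0 as')
      = (if x0 = s0 then 1 else 0) * (k 0 x0 a0 (xs' 0) *
          ∏ t : Fin T, (fun n => k (n+1)) t (xs' t.castSucc) (as' t) (xs' t.succ)) := by
  unfold traj
  rw [Fin.prod_univ_succ]
  simp only [Fin.cons_zero, Fin.castSucc_zero, ← Fin.succ_castSucc, Fin.cons_succ,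
    Fin.val_succ, Fin.val_zero, mul_assoc]

/-- Front-peeling of the trajectory sum. -/
lemma traj_front (T : ℕ) (k : ℕ → S → A → S → ℝ) (s0 : S)
    (G : (Fin (T + 2) → S) → (Fin (T + 1) → A) → ℝ) :
    (∑ xs : Fin (T + 2) → S, ∑ as : Fin (T + 1) → A, traj (T+1) k s0 xs as * G xs as)
      = ∑ a0 : A, ∑ x1 : S,
          k 0 s0 a0 x1 * ∑ xs' : Fin (T + 1) → S, ∑ as' : Fin T → A,
            traj T (fun n => k (n+1)) x1 xs' as' * G (Fin.cons s0 xs') (Fin.cons a0 as') := by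
  rw [sum_pi_succ]
  calc ∑ x0 : S, ∑ xs' : Fin (T+1) → S, ∑ as : Fin (T+1) → A,
          traj (T+1) k s0 (Fin.cons x0 xs') as * G (Fin.cons x0 xs') as
      = ∑ x0 : S, ∑ xs' : Fin (T+1) → S, ∑ a0 : A, ∑ as' : Fin T → A,
          traj (T+1) k s0 (Fin.cons x0 xs') (Fin.cons a0 as')
            * G (Fin.cons x0 xs') (Fin.cons a0 as') := by
        refine Finset.sum_congr rfl fun x0 _ => Finset.sum_congr rfl fun xs' _ => ?_
        exact sum_pi_succ T _
    _ = ∑ xs' : Fin (T+1) → S, ∑ a0 : A, ∑ as' : Fin T → A,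
          traj (T+1) k s0 (Fin.cons s0 xs') (Fin.cons a0 as')
            * G (Fin.cons s0 xs') (Fin.cons a0 as') := by
        rw [Finset.sum_eq_single s0]
        · intro x0 _ hx0
          refine Finset.sum_eq_zero fun xs' _ => Finset.sum_eq_zero fun a0 _ =>
            Finset.sum_eq_zero fun as' _ => ?_
          rw [traj_cons, if_neg hx0]; ring
        · intro h; exact absurd (Finset.mem_univ s0) h
    _ = ∑ a0 : A, ∑ x1 : S, k 0 s0 a0 x1 * ∑ xs' : Fin (T + 1) → S, ∑ as' : Fin T → A,
          traj T (fun n => k (n+1)) x1 xs' as' * G (Fin.cons s0 xs') (Fin.cons a0 as') := by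
        rw [swap12]
        refine Finset.sum_congr rfl fun a0 _ => ?_
        have hB : ∀ x1 : S, k 0 s0 a0 x1 * ∑ xs' : Fin (T+1) → S, ∑ as' : Fin T → A,
              traj T (fun n => k (n+1)) x1 xs' as' * G (Fin.cons s0 xs') (Fin.cons a0 as')
            = ∑ xs' : Fin (T+1) → S, ∑ as' : Fin T → A,
              k 0 s0 a0 x1 * (traj T (fun n => k (n+1)) x1 xs' as'
                * G (Fin.cons s0 xs') (Fin.cons a0 as')) := by
          intro x1
          rw [Finset.mul_sum]
          exact Finset.sum_congr rfl fun xs' _ => Finset.mul_sum _ _ _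
        simp only [hB]
        rw [swap12 (fun x1 xs' => ∑ as' : Fin T → A,
          k 0 s0 a0 x1 * (traj T (fun n => k (n+1)) x1 xs' as'
            * G (Fin.cons s0 xs') (Fin.cons a0 as')))]
        refine Finset.sum_congr rfl fun xs' _ => ?_
        have hsw : (∑ x1 : S, ∑ as' : Fin T → A, k 0 s0 a0 x1
              * (traj T (fun n => k (n+1)) x1 xs' as' * G (Fin.cons s0 xs') (Fin.cons a0 as')))
            = ∑ as' : Fin T → A, ∑ x1 : S, k 0 s0 a0 x1
              * (traj T (fun n => k (n+1)) x1 xs' as'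
                * G (Fin.cons s0 xs') (Fin.cons a0 as')) := swap12 _
        rw [hsw]
        refine Finset.sum_congr rfl fun as' _ => ?_
        rw [traj_cons, if_pos rfl, one_mul]
        have htr : ∀ x1 : S, traj T (fun n => k (n+1)) x1 xs' as'
            = (if xs' 0 = x1 then 1 else 0)
              * ∏ t : Fin T, (fun n => k (n+1)) (t : ℕ) (xs' t.castSucc) (as' t) (xs' t.succ) :=
          fun _ => rfl
        simp only [htr, mul_ite, ite_mul, one_mul, zero_mul, mul_zero,
          Finset.sum_ite_eq, Finset.mem_univ, if_true]
        ring

/-- Total mass of the trajectory measure. -/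
lemma traj_total (T : ℕ) (k : ℕ → S → A → S → ℝ) (s0 : S)
    (hst : ∀ t, t < T → ∀ x : S, ∑ a : A, ∑ x' : S, k t x a x' = 1) :
    (∑ xs : Fin (T + 1) → S, ∑ as : Fin T → A, traj T k s0 xs as) = 1 := by
  induction T generalizing k s0 with
  | zero =>
    have : ∀ xs : Fin 1 → S, ∑ as : Fin 0 → A, traj 0 k s0 xs as
        = if xs 0 = s0 then 1 else 0 := by
      intro xs
      rw [Finset.sum_eq_single (fun i : Fin 0 => i.elim0)]
      · simp [traj]
      · intro b _ hb; exact absurd (funext fun i => i.elim0) hb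
      · intro h; exact absurd (Finset.mem_univ _) h
    rw [Finset.sum_congr rfl fun xs _ => this xs]
    rw [← (Equiv.funUnique (Fin 1) S).symm.sum_comp (fun xs => if xs 0 = s0 then 1 else 0)]
    simp [Equiv.funUnique]
  | succ T ih =>
    have := traj_front T k s0 (fun _ _ => 1)
    simp only [mul_one] at this
    rw [this]
    have h1 : ∀ x1 : S, (∑ xs' : Fin (T+1) → S, ∑ as' : Fin T → A,
        traj T (fun n => k (n+1)) x1 xs' as') = 1 := fun x1 =>
      ih (fun n => k (n+1)) x1 (fun t ht x => hst (t+1) (by omega) x)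
    calc ∑ a0 : A, ∑ x1 : S, k 0 s0 a0 x1 * ∑ xs' : Fin (T+1) → S, ∑ as' : Fin T → A,
            traj T (fun n => k (n+1)) x1 xs' as'
        = ∑ a0 : A, ∑ x1 : S, k 0 s0 a0 x1 := by
          refine Finset.sum_congr rfl fun a0 _ => Finset.sum_congr rfl fun x1 _ => ?_
          rw [h1 x1, mul_one]
      _ = 1 := hst 0 (by omega) s0

/-- Expectation of a function of the terminal state. -/
lemma traj_last (T : ℕ) (k : ℕ → S → A → S → ℝ) (s0 : S) (G : S → ℝ) :
    (∑ xs : Fin (T + 1) → S, ∑ as : Fin T → A, traj T k s0 xs as * G (xs (Fin.last T)))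
      = ∑ x : S, nuM k s0 T x * G x := by
  induction T generalizing k s0 with
  | zero =>
    have : ∀ xs : Fin 1 → S, ∑ as : Fin 0 → A, traj 0 k s0 xs as * G (xs (Fin.last 0))
        = (if xs 0 = s0 then 1 else 0) * G (xs 0) := by
      intro xs
      rw [Finset.sum_eq_single (fun i : Fin 0 => i.elim0)]
      · simp [traj]
      · intro b _ hb; exact absurd (funext fun i => i.elim0) hb
      · intro h; exact absurd (Finset.mem_univ _) h
    rw [Finset.sum_congr rfl fun xs _ => this xs]
    rw [← (Equiv.funUnique (Fin 1) S).symm.sum_comp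
      (fun xs => (if xs 0 = s0 then 1 else 0) * G (xs 0))]
    simp [Equiv.funUnique, nuM, ite_mul, eq_comm]
  | succ T ih =>
    have hfr := traj_front T k s0 (fun xs _ => G (xs (Fin.last (T+1))))
    have hlast : ∀ xs' : Fin (T+1) → S,
        (Fin.cons s0 xs' : Fin (T+2) → S) (Fin.last (T+1)) = xs' (Fin.last T) := by
      intro xs'
      rw [← Fin.succ_last, Fin.cons_succ]
    simp only [hlast] at hfr
    rw [hfr]
    calc ∑ a0 : A, ∑ x1 : S, k 0 s0 a0 x1 * ∑ xs' : Fin (T+1) → S, ∑ as' : Fin T → A,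
            traj T (fun n => k (n+1)) x1 xs' as' * G (xs' (Fin.last T))
        = ∑ a0 : A, ∑ x1 : S, k 0 s0 a0 x1 * ∑ x : S, nuM (fun n => k (n+1)) x1 T x * G x := by
          refine Finset.sum_congr rfl fun a0 _ => Finset.sum_congr rfl fun x1 _ => ?_
          rw [ih]
      _ = ∑ a0 : A, ∑ x1 : S, ∑ x : S,
            k 0 s0 a0 x1 * nuM (fun n => k (n+1)) x1 T x * G x := by
          refine Finset.sum_congr rfl fun a0 _ => Finset.sum_congr rfl fun x1 _ => ?_
          rw [Finset.mul_sum]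
          exact Finset.sum_congr rfl fun x _ => by ring
      _ = ∑ x : S, ∑ a0 : A, ∑ x1 : S,
            k 0 s0 a0 x1 * nuM (fun n => k (n+1)) x1 T x * G x := by
          calc ∑ a0 : A, ∑ x1 : S, ∑ x : S,
                k 0 s0 a0 x1 * nuM (fun n => k (n+1)) x1 T x * G x
              = ∑ a0 : A, ∑ x : S, ∑ x1 : S,
                k 0 s0 a0 x1 * nuM (fun n => k (n+1)) x1 T x * G x :=
                Finset.sum_congr rfl fun a0 _ => swap12 _
            _ = ∑ x : S, ∑ a0 : A, ∑ x1 : S,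
                k 0 s0 a0 x1 * nuM (fun n => k (n+1)) x1 T x * G x := swap12 _
      _ = ∑ x : S, (∑ a0 : A, ∑ x1 : S, k 0 s0 a0 x1 * nuM (fun n => k (n+1)) x1 T x) * G x := by
          refine Finset.sum_congr rfl fun x _ => ?_
          rw [Finset.sum_mul]
          exact Finset.sum_congr rfl fun a0 _ => (Finset.sum_mul _ _ _).symm
      _ = ∑ x : S, nuM k s0 (T+1) x * G x := by
          refine Finset.sum_congr rfl fun x _ => ?_
          rw [nuM_shift]

lemma swap3 {α β γ : Type*} [Fintype α] [Fintype β] [Fintype γ] (F : α → β → γ → ℝ) :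
    ∑ a : α, ∑ b : β, ∑ c : γ, F a b c = ∑ c : γ, ∑ a : α, ∑ b : β, F a b c :=
  calc ∑ a : α, ∑ b : β, ∑ c : γ, F a b c
      = ∑ a : α, ∑ c : γ, ∑ b : β, F a b c := Finset.sum_congr rfl fun a _ => swap12 _
    _ = ∑ c : γ, ∑ a : α, ∑ b : β, F a b c := swap12 _

/-- Expectation of a function of one transition step. -/
lemma traj_step (T t0 : ℕ) (k : ℕ → S → A → S → ℝ) (s0 : S)
    (h : t0 < T)
    (hst : ∀ t, t0 < t → t < T → ∀ x : S, ∑ a : A, ∑ x' : S, k t x a x' = 1)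
    (F : S → A → S → ℝ) :
    (∑ xs : Fin (T + 1) → S, ∑ as : Fin T → A, traj T k s0 xs as
        * F (xs ⟨t0, by omega⟩) (as ⟨t0, h⟩) (xs ⟨t0 + 1, by omega⟩))
      = ∑ x : S, ∑ a : A, ∑ x' : S, nuM k s0 t0 x * k t0 x a x' * F x a x' := by
  induction t0 generalizing T k s0 with
  | zero =>
    cases T with
    | zero => omega
    | succ T' =>
      have hfr := traj_front T' k s0
        (fun xs as => F (xs ⟨0, by omega⟩) (as ⟨0, by omega⟩) (xs ⟨1, by omega⟩))
      have hG : ∀ (xs' : Fin (T'+1) → S) (a0 : A) (as' : Fin T' → A),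
          F ((Fin.cons s0 xs' : Fin (T'+2) → S) ⟨0, by omega⟩)
            ((Fin.cons a0 as' : Fin (T'+1) → A) ⟨0, by omega⟩)
            ((Fin.cons s0 xs' : Fin (T'+2) → S) ⟨1, by omega⟩)
          = F s0 a0 (xs' 0) := by
        intro xs' a0 as'
        have h1 : ((⟨1, by omega⟩ : Fin (T'+2))) = Fin.succ (0 : Fin (T'+1)) := rfl
        rw [h1, Fin.cons_succ]
        rfl
      simp only [hG] at hfr
      rw [hfr]
      have hinner : ∀ (a0 : A) (x1 : S),
          (∑ xs' : Fin (T'+1) → S, ∑ as' : Fin T' → A,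
            traj T' (fun n => k (n+1)) x1 xs' as' * F s0 a0 (xs' 0)) = F s0 a0 x1 := by
        intro a0 x1
        have hX : ∀ (xs' : Fin (T'+1) → S) (as' : Fin T' → A),
            traj T' (fun n => k (n+1)) x1 xs' as' * F s0 a0 (xs' 0)
              = traj T' (fun n => k (n+1)) x1 xs' as' * F s0 a0 x1 := by
          intro xs' as'
          by_cases hx : xs' 0 = x1
          · rw [hx]
          · have : traj T' (fun n => k (n+1)) x1 xs' as' = 0 := by
              unfold traj; rw [if_neg hx, zero_mul]
            rw [this, zero_mul, zero_mul]
        rw [Finset.sum_congr rfl fun xs' _ => Finset.sum_congr rfl fun as' _ => hX xs' as']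
        have : (∑ xs' : Fin (T'+1) → S, ∑ as' : Fin T' → A,
            traj T' (fun n => k (n+1)) x1 xs' as' * F s0 a0 x1)
            = (∑ xs' : Fin (T'+1) → S, ∑ as' : Fin T' → A,
              traj T' (fun n => k (n+1)) x1 xs' as') * F s0 a0 x1 := by
          rw [Finset.sum_mul]
          exact Finset.sum_congr rfl fun xs' _ => (Finset.sum_mul _ _ _).symm
        rw [this, traj_total T' (fun n => k (n+1)) x1
          (fun t ht x => hst (t+1) (by omega) (by omega) x), one_mul]
      rw [Finset.sum_congr rfl fun a0 _ => Finset.sum_congr rfl fun x1 _ => by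
        rw [hinner a0 x1]]
      symm
      calc ∑ x : S, ∑ a : A, ∑ x' : S, nuM k s0 0 x * k 0 x a x' * F x a x'
          = ∑ x : S, (if x = s0 then 1 else 0)
              * ∑ a : A, ∑ x' : S, k 0 x a x' * F x a x' := by
            refine Finset.sum_congr rfl fun x _ => ?_
            rw [Finset.mul_sum]
            refine Finset.sum_congr rfl fun a _ => ?_
            rw [Finset.mul_sum]
            refine Finset.sum_congr rfl fun x' _ => ?_
            show nuM k s0 0 x * k 0 x a x' * F x a x' = _
            simp only [nuM]; ring
        _ = ∑ a : A, ∑ x' : S, k 0 s0 a x' * F s0 a x' := by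
            simp [ite_mul, Finset.sum_ite_eq']
  | succ t0 ih =>
    cases T with
    | zero => omega
    | succ T' =>
      have ht0 : t0 < T' := by omega
      have hfr := traj_front T' k s0
        (fun xs as => F (xs ⟨t0+1, by omega⟩) (as ⟨t0+1, by omega⟩) (xs ⟨t0+2, by omega⟩))
      have hG : ∀ (xs' : Fin (T'+1) → S) (a0 : A) (as' : Fin T' → A),
          F ((Fin.cons s0 xs' : Fin (T'+2) → S) ⟨t0+1, by omega⟩)
            ((Fin.cons a0 as' : Fin (T'+1) → A) ⟨t0+1, by omega⟩)
            ((Fin.cons s0 xs' : Fin (T'+2) → S) ⟨t0+2, by omega⟩)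
          = F (xs' ⟨t0, by omega⟩) (as' ⟨t0, ht0⟩) (xs' ⟨t0+1, by omega⟩) := by
        intro xs' a0 as'
        have e1 : ((⟨t0+1, by omega⟩ : Fin (T'+2)))
            = Fin.succ (⟨t0, by omega⟩ : Fin (T'+1)) := rfl
        have e2 : ((⟨t0+2, by omega⟩ : Fin (T'+2)))
            = Fin.succ (⟨t0+1, by omega⟩ : Fin (T'+1)) := rfl
        have e3 : ((⟨t0+1, by omega⟩ : Fin (T'+1)))
            = Fin.succ (⟨t0, ht0⟩ : Fin T') := rfl
        rw [e1, e2, e3, Fin.cons_succ, Fin.cons_succ, Fin.cons_succ]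
      simp only [hG] at hfr
      rw [hfr]
      have hIH : ∀ x1 : S, (∑ xs' : Fin (T'+1) → S, ∑ as' : Fin T' → A,
          traj T' (fun n => k (n+1)) x1 xs' as'
            * F (xs' ⟨t0, by omega⟩) (as' ⟨t0, ht0⟩) (xs' ⟨t0+1, by omega⟩))
          = ∑ x : S, ∑ a : A, ∑ x' : S,
            nuM (fun n => k (n+1)) x1 t0 x * k (t0+1) x a x' * F x a x' :=
        fun x1 => ih T' (fun n => k (n+1)) x1 ht0
          (fun t ht1 ht2 x => hst (t+1) (by omega) (by omega) x) 
      rw [Finset.sum_congr rfl fun a0 _ => Finset.sum_congr rfl fun x1 _ => by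
        rw [hIH x1]]
      -- now pure sum manipulation
      have hC : ∀ x1 : S, (∑ x : S, ∑ a : A, ∑ x' : S,
          nuM (fun n => k (n+1)) x1 t0 x * k (t0+1) x a x' * F x a x')
          = ∑ x : S, nuM (fun n => k (n+1)) x1 t0 x
            * ∑ a : A, ∑ x' : S, k (t0+1) x a x' * F x a x' := by
        intro x1
        refine Finset.sum_congr rfl fun x _ => ?_
        rw [Finset.mul_sum]
        refine Finset.sum_congr rfl fun a _ => ?_
        rw [Finset.mul_sum]
        exact Finset.sum_congr rfl fun x' _ => by ring
      simp only [hC]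
      have hR : ∀ x : S, (∑ a : A, ∑ x' : S,
          nuM k s0 (t0+1) x * k (t0+1) x a x' * F x a x')
          = nuM k s0 (t0+1) x * ∑ a : A, ∑ x' : S, k (t0+1) x a x' * F x a x' := by
        intro x
        rw [Finset.mul_sum]
        refine Finset.sum_congr rfl fun a _ => ?_
        rw [Finset.mul_sum]
        exact Finset.sum_congr rfl fun x' _ => by ring
      rw [Finset.sum_congr rfl fun x _ => hR x]
      set C : S → ℝ := fun x => ∑ a : A, ∑ x' : S, k (t0+1) x a x' * F x a x' with hCdef
      calc ∑ a0 : A, ∑ x1 : S, k 0 s0 a0 x1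
              * ∑ x : S, nuM (fun n => k (n+1)) x1 t0 x * C x
          = ∑ a0 : A, ∑ x1 : S, ∑ x : S,
              k 0 s0 a0 x1 * nuM (fun n => k (n+1)) x1 t0 x * C x := by
            refine Finset.sum_congr rfl fun a0 _ => Finset.sum_congr rfl fun x1 _ => ?_
            rw [Finset.mul_sum]
            exact Finset.sum_congr rfl fun x _ => by ring
        _ = ∑ x : S, ∑ a0 : A, ∑ x1 : S,
              k 0 s0 a0 x1 * nuM (fun n => k (n+1)) x1 t0 x * C x := swap3 _
        _ = ∑ x : S, nuM k s0 (t0+1) x * C x := by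
            refine Finset.sum_congr rfl fun x _ => ?_
            rw [nuM_shift k s0 t0 x, Finset.sum_mul]
            refine Finset.sum_congr rfl fun a0 _ => ?_
            rw [Finset.sum_mul]

end Generic


section App
variable {X A : Type*} [Fintype X] [Fintype A] [DecidableEq X] [DecidableEq A]

/-- Combined kernel of the original model. -/
noncomputable def kOrig (T : ℕ) (Q : X → A → X → ℝ) (d : Fin T → X → A → ℝ) :
    ℕ → X → A → X → ℝ :=
  fun t x a x' => (if h : t < T then d ⟨t, h⟩ x a else 0) * Q x a x'

/-- Combined kernel twisted by the multiplicative cost `f · i`. -/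
noncomputable def kMul (T : ℕ) (Q : X → A → X → ℝ) {K : ℕ}
    (f : ℕ → Fin (K + 1) → X → A → X → ℝ) (i : Fin (K + 1)) (d : Fin T → X → A → ℝ) :
    ℕ → X → A → X → ℝ :=
  fun t x a x' => (if h : t < T then d ⟨t, h⟩ x a else 0) * Q x a x' * f t i x a x'

/-- Combined kernel of the augmented model. -/
noncomputable def kAug (T K : ℕ) (Q : X → A → X → ℝ)
    (f : ℕ → Fin (K + 1) → X → A → X → ℝ) (dbar : Fin T → X × ZVec K → A → ℝ) :
    ℕ → (X × ZVec K) → A → (X × ZVec K) → ℝ :=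
  fun t xz a xz' => (if h : t < T then dbar ⟨t, h⟩ xz a else 0)
    * Qbar K Q f (t + 1) xz.1 xz.2 a xz'.1 xz'.2

lemma trajProb_eq_traj (T : ℕ) (Q : X → A → X → ℝ) (d : Fin T → X → A → ℝ) (s : X)
    (xs : Fin (T + 1) → X) (as : Fin T → A) :
    trajProb T Q d s xs as = traj T (kOrig T Q d) s xs as := by
  unfold trajProb traj kOrig
  congr 1
  refine Finset.prod_congr rfl fun t _ => ?_
  rw [dif_pos t.isLt, Fin.eta]

lemma trajProbBar_eq_traj (T K : ℕ) (Q : X → A → X → ℝ)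
    (f : ℕ → Fin (K + 1) → X → A → X → ℝ) (dbar : Fin T → X × ZVec K → A → ℝ) (s : X)
    (xzs : Fin (T + 1) → X × ZVec K) (as : Fin T → A) :
    trajProbBar T K Q f dbar s xzs as = traj T (kAug T K Q f dbar) (s, oneVec K) xzs as := by
  unfold trajProbBar traj kAug
  congr 1
  refine Finset.prod_congr rfl fun t _ => ?_
  rw [dif_pos t.isLt, Fin.eta]

lemma rho_zero (c : ℝ) (b : Fin 2) : rho c 0 b = 1 := by
  simp [rho]

lemma rho_one_zero (c : ℝ) : rho c 1 0 = 1 - c := by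
  norm_num [rho]

lemma rho_one_one (c : ℝ) : rho c 1 1 = c := by
  norm_num [rho]

lemma fin2_cases (b : Fin 2) : b = 0 ∨ b = 1 := by omega

lemma rho_nonneg {c : ℝ} (h0 : 0 ≤ c) (h1 : c ≤ 1) (zi zi' : Fin 2) :
    0 ≤ rho c zi zi' := by
  unfold rho
  have : (0:ℝ) ≤ 1 - c := by linarith
  positivity

/-- Rewriting `Qbar` as a product of per-coordinate factors. -/
lemma Qbar_eq_prod (K : ℕ) (Q : X → A → X → ℝ) (f : ℕ → Fin (K + 1) → X → A → X → ℝ)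
    (t : ℕ) (x : X) (z : ZVec K) (a : A) (x' : X) (z' : ZVec K) :
    Qbar K Q f t x z a x' z' = Q x a x' *
      ∏ i, (if z i = 0 ∧ z' i = 1 then 0 else rho (f (t - 1) i x a x') (z i) (z' i)) := by
  unfold Qbar
  split_ifs with h
  · obtain ⟨i, hi⟩ := h
    have hz : (if z i = 0 ∧ z' i = 1 then (0:ℝ)
        else rho (f (t - 1) i x a x') (z i) (z' i)) = 0 := if_pos hi
    rw [Finset.prod_eq_zero (Finset.mem_univ i) hz, mul_zero]
  · congr 1
    refine Finset.prod_congr rfl fun i _ => ?_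
    rw [if_neg fun hc => h ⟨i, hc⟩]

lemma zfac_sum (c : ℝ) (zi : Fin 2) :
    ∑ b : Fin 2, (if zi = 0 ∧ b = 1 then 0 else rho c zi b) = 1 := by
  rcases fin2_cases zi with h | h <;>
    simp [h, Fin.sum_univ_two, rho_zero, rho_one_zero, rho_one_one]

lemma zsum_one {K : ℕ} (c : Fin (K + 1) → ℝ) (z : ZVec K) :
    ∑ z' : ZVec K, ∏ i, (if z i = 0 ∧ z' i = 1 then 0 else rho (c i) (z i) (z' i)) = 1 := by
  rw [← Fintype.prod_sum (fun i b => if z i = 0 ∧ b = 1 then 0 else rho (c i) (z i) b)]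
  exact Finset.prod_eq_one fun i _ => zfac_sum (c i) (z i)

lemma zsum_pick {K : ℕ} (c : Fin (K + 1) → ℝ) (z : ZVec K) (j : Fin (K + 1)) :
    ∑ z' : ZVec K, ((z' j : ℕ) : ℝ)
        * ∏ i, (if z i = 0 ∧ z' i = 1 then 0 else rho (c i) (z i) (z' i))
      = ((z j : ℕ) : ℝ) * c j := by
  have key : ∀ z' : ZVec K, ((z' j : ℕ) : ℝ)
      * ∏ i, (if z i = 0 ∧ z' i = 1 then 0 else rho (c i) (z i) (z' i))
      = ∏ i, ((if i = j then ((z' i : ℕ) : ℝ) else 1)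
          * (if z i = 0 ∧ z' i = 1 then 0 else rho (c i) (z i) (z' i))) := by
    intro z'
    rw [Finset.prod_mul_distrib]
    congr 1
    rw [Finset.prod_ite_eq' Finset.univ j (fun i => ((z' i : ℕ) : ℝ))]
    simp
  rw [Finset.sum_congr rfl fun z' _ => key z']
  rw [← Fintype.prod_sum (fun i (b : Fin 2) => (if i = j then ((b : ℕ) : ℝ) else 1)
      * (if z i = 0 ∧ b = 1 then 0 else rho (c i) (z i) b))]
  rw [Finset.prod_eq_single j (fun i _ hij => by rcases fin2_cases (z i) with h | h <;> simp [hij, h, Fin.sum_univ_two, rho_zero, rho_one_zero, rho_one_one])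
    (fun h => absurd (Finset.mem_univ j) h)]
  rcases fin2_cases (z j) with h | h <;>
    simp [h, Fin.sum_univ_two, rho_zero, rho_one_zero, rho_one_one]

lemma Qbar_zsum {K : ℕ} (Q : X → A → X → ℝ) (f : ℕ → Fin (K + 1) → X → A → X → ℝ)
    (t : ℕ) (x : X) (z : ZVec K) (a : A) (x' : X) :
    ∑ z' : ZVec K, Qbar K Q f t x z a x' z' = Q x a x' := by
  rw [Finset.sum_congr rfl fun z' _ => Qbar_eq_prod K Q f t x z a x' z', ← Finset.mul_sum,
    zsum_one, mul_one]

lemma Qbar_zpick {K : ℕ} (Q : X → A → X → ℝ) (f : ℕ → Fin (K + 1) → X → A → X → ℝ)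
    (t : ℕ) (x : X) (z : ZVec K) (a : A) (x' : X) (j : Fin (K + 1)) :
    ∑ z' : ZVec K, ((z' j : ℕ) : ℝ) * Qbar K Q f t x z a x' z'
      = ((z j : ℕ) : ℝ) * Q x a x' * f (t - 1) j x a x' := by
  have : ∀ z' : ZVec K, ((z' j : ℕ) : ℝ) * Qbar K Q f t x z a x' z'
      = Q x a x' * (((z' j : ℕ) : ℝ)
        * ∏ i, (if z i = 0 ∧ z' i = 1 then 0 else rho (f (t - 1) i x a x') (z i) (z' i))) := by
    intro z'; rw [Qbar_eq_prod]; ring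
  rw [Finset.sum_congr rfl fun z' _ => this z', ← Finset.mul_sum,
    zsum_pick (fun i => f (t - 1) i x a x') z j]
  ring

lemma Qbar_sum {K : ℕ} (Q : X → A → X → ℝ) (hQsum : ∀ x a, ∑ x' : X, Q x a x' = 1)
    (f : ℕ → Fin (K + 1) → X → A → X → ℝ) (t : ℕ) (x : X) (z : ZVec K) (a : A) :
    ∑ xz' : X × ZVec K, Qbar K Q f t x z a xz'.1 xz'.2 = 1 := by
  rw [Fintype.sum_prod_type]
  calc ∑ x' : X, ∑ z' : ZVec K, Qbar K Q f t x z a x' z'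
      = ∑ x' : X, Q x a x' := Finset.sum_congr rfl fun x' _ => Qbar_zsum Q f t x z a x'
    _ = 1 := hQsum x a

lemma Qbar_nonneg {K : ℕ} (Q : X → A → X → ℝ) (hQnn : ∀ x a x', 0 ≤ Q x a x')
    (f : ℕ → Fin (K + 1) → X → A → X → ℝ) (t : ℕ)
    (hf : ∀ i x a x', 0 ≤ f (t - 1) i x a x' ∧ f (t - 1) i x a x' ≤ 1)
    (x : X) (z : ZVec K) (a : A) (x' : X) (z' : ZVec K) :
    0 ≤ Qbar K Q f t x z a x' z' := by
  rw [Qbar_eq_prod]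
  refine mul_nonneg (hQnn x a x') (Finset.prod_nonneg fun i _ => ?_)
  split_ifs
  · exact le_refl 0
  · exact rho_nonneg (hf i x a x').1 (hf i x a x').2 _ _

/-- Stochasticity of the augmented combined kernel. -/
lemma kAug_sum {T K : ℕ} (Q : X → A → X → ℝ) (hQsum : ∀ x a, ∑ x' : X, Q x a x' = 1)
    (f : ℕ → Fin (K + 1) → X → A → X → ℝ) (dbar : Fin T → X × ZVec K → A → ℝ)
    (hd : IsMR dbar) (t : ℕ) (ht : t < T) (xz : X × ZVec K) :
    ∑ a : A, ∑ xz' : X × ZVec K, kAug T K Q f dbar t xz a xz' = 1 := by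
  unfold kAug
  calc ∑ a : A, ∑ xz' : X × ZVec K, (if h : t < T then dbar ⟨t, h⟩ xz a else 0)
        * Qbar K Q f (t + 1) xz.1 xz.2 a xz'.1 xz'.2
      = ∑ a : A, dbar ⟨t, ht⟩ xz a := by
        refine Finset.sum_congr rfl fun a _ => ?_
        rw [← Finset.mul_sum, Qbar_sum Q hQsum f (t+1) xz.1 xz.2 a, mul_one, dif_pos ht]
    _ = 1 := (hd ⟨t, ht⟩ xz).2

/-- Stochasticity of the original combined kernel. -/
lemma kOrig_sum {T : ℕ} (Q : X → A → X → ℝ) (hQsum : ∀ x a, ∑ x' : X, Q x a x' = 1)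
    (d : Fin T → X → A → ℝ) (hd : IsMR d) (t : ℕ) (ht : t < T) (x : X) :
    ∑ a : A, ∑ x' : X, kOrig T Q d t x a x' = 1 := by
  unfold kOrig
  calc ∑ a : A, ∑ x' : X, (if h : t < T then d ⟨t, h⟩ x a else 0) * Q x a x'
      = ∑ a : A, d ⟨t, ht⟩ x a := by
        refine Finset.sum_congr rfl fun a _ => ?_
        rw [← Finset.mul_sum, hQsum x a, mul_one, dif_pos ht]
    _ = 1 := (hd ⟨t, ht⟩ x).2

/-- Marginalizing the augmented forward measure over `z` (lifted policy). -/
lemma nu_aug_marg {T K : ℕ} (Q : X → A → X → ℝ)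
    (f : ℕ → Fin (K + 1) → X → A → X → ℝ) (d : Fin T → X → A → ℝ) (s : X)
    (t : ℕ) (x : X) :
    ∑ z : ZVec K, nuM (kAug T K Q f (fun t xz a => d t xz.1 a)) (s, oneVec K) t (x, z)
      = nuM (kOrig T Q d) s t x := by
  induction t generalizing x with
  | zero =>
    show (∑ z : ZVec K, if ((x, z) : X × ZVec K) = (s, oneVec K) then (1:ℝ) else 0)
      = if x = s then 1 else 0
    by_cases hx : x = s
    · subst hx
      rw [if_pos rfl, Finset.sum_eq_single (oneVec K)]
      · simp
      · intro z _ hz; simp [Prod.ext_iff, hz]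
      · intro h; exact absurd (Finset.mem_univ _) h
    · rw [if_neg hx]
      exact Finset.sum_eq_zero fun z _ => by simp [Prod.ext_iff, hx]
  | succ t ih =>
    show (∑ z' : ZVec K, ∑ xz : X × ZVec K, ∑ a : A,
        nuM (kAug T K Q f (fun t xz a => d t xz.1 a)) (s, oneVec K) t xz
          * kAug T K Q f (fun t xz a => d t xz.1 a) t xz a (x, z'))
      = ∑ x0 : X, ∑ a : A, nuM (kOrig T Q d) s t x0 * kOrig T Q d t x0 a x
    rw [← swap3 (fun (xz : X × ZVec K) (a : A) (z' : ZVec K) =>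
      nuM (kAug T K Q f (fun t xz a => d t xz.1 a)) (s, oneVec K) t xz
        * kAug T K Q f (fun t xz a => d t xz.1 a) t xz a (x, z'))]
    calc ∑ xz : X × ZVec K, ∑ a : A, ∑ z' : ZVec K,
            nuM (kAug T K Q f (fun t xz a => d t xz.1 a)) (s, oneVec K) t xz
              * kAug T K Q f (fun t xz a => d t xz.1 a) t xz a (x, z')
        = ∑ xz : X × ZVec K, ∑ a : A,
            nuM (kAug T K Q f (fun t xz a => d t xz.1 a)) (s, oneVec K) t xz
              * ((if h : t < T then d ⟨t, h⟩ xz.1 a else 0) * Q xz.1 a x) := by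
          refine Finset.sum_congr rfl fun xz _ => Finset.sum_congr rfl fun a _ => ?_
          rw [← Finset.mul_sum]
          congr 1
          show (∑ z' : ZVec K, (if h : t < T then d ⟨t, h⟩ xz.1 a else 0)
            * Qbar K Q f (t + 1) xz.1 xz.2 a x z') = _
          rw [← Finset.mul_sum, Qbar_zsum]
      _ = ∑ x0 : X, ∑ z : ZVec K, ∑ a : A,
            nuM (kAug T K Q f (fun t xz a => d t xz.1 a)) (s, oneVec K) t (x0, z)
              * ((if h : t < T then d ⟨t, h⟩ x0 a else 0) * Q x0 a x) := by
          rw [Fintype.sum_prod_type]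
      _ = ∑ x0 : X, ∑ a : A, ∑ z : ZVec K,
            nuM (kAug T K Q f (fun t xz a => d t xz.1 a)) (s, oneVec K) t (x0, z)
              * ((if h : t < T then d ⟨t, h⟩ x0 a else 0) * Q x0 a x) :=
          Finset.sum_congr rfl fun x0 _ => swap12 _
      _ = ∑ x0 : X, ∑ a : A, nuM (kOrig T Q d) s t x0 * kOrig T Q d t x0 a x := by
          refine Finset.sum_congr rfl fun x0 _ => Finset.sum_congr rfl fun a _ => ?_
          rw [← Finset.sum_mul, ih x0]
          rfl

/-- Picking coordinate `j` of `z` in the augmented forward measure (lifted policy). -/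
lemma nu_aug_pick {T K : ℕ} (Q : X → A → X → ℝ)
    (f : ℕ → Fin (K + 1) → X → A → X → ℝ) (d : Fin T → X → A → ℝ) (s : X)
    (j : Fin (K + 1)) (t : ℕ) (x : X) :
    ∑ z : ZVec K, ((z j : ℕ) : ℝ)
        * nuM (kAug T K Q f (fun t xz a => d t xz.1 a)) (s, oneVec K) t (x, z)
      = nuM (kMul T Q f j d) s t x := by
  induction t generalizing x with
  | zero =>
    show (∑ z : ZVec K, ((z j : ℕ) : ℝ)
        * if ((x, z) : X × ZVec K) = (s, oneVec K) then (1:ℝ) else 0)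
      = if x = s then 1 else 0
    by_cases hx : x = s
    · subst hx
      rw [if_pos rfl, Finset.sum_eq_single (oneVec K)]
      · simp [oneVec]
      · intro z _ hz; simp [Prod.ext_iff, hz]
      · intro h; exact absurd (Finset.mem_univ _) h
    · rw [if_neg hx]
      exact Finset.sum_eq_zero fun z _ => by simp [Prod.ext_iff, hx]
  | succ t ih =>
    show (∑ z' : ZVec K, ((z' j : ℕ) : ℝ) * ∑ xz : X × ZVec K, ∑ a : A,
        nuM (kAug T K Q f (fun t xz a => d t xz.1 a)) (s, oneVec K) t xz
          * kAug T K Q f (fun t xz a => d t xz.1 a) t xz a (x, z'))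
      = ∑ x0 : X, ∑ a : A, nuM (kMul T Q f j d) s t x0 * kMul T Q f j d t x0 a x
    calc ∑ z' : ZVec K, ((z' j : ℕ) : ℝ) * ∑ xz : X × ZVec K, ∑ a : A,
            nuM (kAug T K Q f (fun t xz a => d t xz.1 a)) (s, oneVec K) t xz
              * kAug T K Q f (fun t xz a => d t xz.1 a) t xz a (x, z')
        = ∑ z' : ZVec K, ∑ xz : X × ZVec K, ∑ a : A, ((z' j : ℕ) : ℝ)
            * (nuM (kAug T K Q f (fun t xz a => d t xz.1 a)) (s, oneVec K) t xz
              * kAug T K Q f (fun t xz a => d t xz.1 a) t xz a (x, z')) := by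
          refine Finset.sum_congr rfl fun z' _ => ?_
          rw [Finset.mul_sum]
          exact Finset.sum_congr rfl fun xz _ => Finset.mul_sum _ _ _
      _ = ∑ xz : X × ZVec K, ∑ a : A, ∑ z' : ZVec K, ((z' j : ℕ) : ℝ)
            * (nuM (kAug T K Q f (fun t xz a => d t xz.1 a)) (s, oneVec K) t xz
              * kAug T K Q f (fun t xz a => d t xz.1 a) t xz a (x, z')) :=
          (swap3 _).symm
      _ = ∑ xz : X × ZVec K, ∑ a : A,
            nuM (kAug T K Q f (fun t xz a => d t xz.1 a)) (s, oneVec K) t xz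
              * ((if h : t < T then d ⟨t, h⟩ xz.1 a else 0)
                * (((xz.2 j : ℕ) : ℝ) * Q xz.1 a x * f t j xz.1 a x)) := by
          refine Finset.sum_congr rfl fun xz _ => Finset.sum_congr rfl fun a _ => ?_
          have expand : ∀ z' : ZVec K, ((z' j : ℕ) : ℝ)
              * (nuM (kAug T K Q f (fun t xz a => d t xz.1 a)) (s, oneVec K) t xz
                * kAug T K Q f (fun t xz a => d t xz.1 a) t xz a (x, z'))
              = nuM (kAug T K Q f (fun t xz a => d t xz.1 a)) (s, oneVec K) t xz
                * ((if h : t < T then d ⟨t, h⟩ xz.1 a else 0)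
                  * (((z' j : ℕ) : ℝ) * Qbar K Q f (t + 1) xz.1 xz.2 a x z')) := by
            intro z'
            show _ * (_ * ((if h : t < T then d ⟨t, h⟩ xz.1 a else 0)
              * Qbar K Q f (t + 1) xz.1 xz.2 a x z')) = _
            ring
          rw [Finset.sum_congr rfl fun z' _ => expand z', ← Finset.mul_sum, ← Finset.mul_sum,
            Qbar_zpick Q f (t+1) xz.1 xz.2 a x j]
          norm_num
      _ = ∑ x0 : X, ∑ z : ZVec K, ∑ a : A,
            nuM (kAug T K Q f (fun t xz a => d t xz.1 a)) (s, oneVec K) t (x0, z)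
              * ((if h : t < T then d ⟨t, h⟩ x0 a else 0)
                * (((z j : ℕ) : ℝ) * Q x0 a x * f t j x0 a x)) := by
          rw [Fintype.sum_prod_type]
      _ = ∑ x0 : X, ∑ a : A, ∑ z : ZVec K,
            nuM (kAug T K Q f (fun t xz a => d t xz.1 a)) (s, oneVec K) t (x0, z)
              * ((if h : t < T then d ⟨t, h⟩ x0 a else 0)
                * (((z j : ℕ) : ℝ) * Q x0 a x * f t j x0 a x)) :=
          Finset.sum_congr rfl fun x0 _ => swap12 _
      _ = ∑ x0 : X, ∑ a : A, nuM (kMul T Q f j d) s t x0 * kMul T Q f j d t x0 a x := by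
          refine Finset.sum_congr rfl fun x0 _ => Finset.sum_congr rfl fun a _ => ?_
          have : ∀ z : ZVec K,
              nuM (kAug T K Q f (fun t xz a => d t xz.1 a)) (s, oneVec K) t (x0, z)
                * ((if h : t < T then d ⟨t, h⟩ x0 a else 0)
                  * (((z j : ℕ) : ℝ) * Q x0 a x * f t j x0 a x))
              = (((z j : ℕ) : ℝ)
                  * nuM (kAug T K Q f (fun t xz a => d t xz.1 a)) (s, oneVec K) t (x0, z))
                * ((if h : t < T then d ⟨t, h⟩ x0 a else 0) * Q x0 a x * f t j x0 a x) := by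
            intro z; ring
          rw [Finset.sum_congr rfl fun z _ => this z, ← Finset.sum_mul, ih x0]
          rfl

/-- Occupation-measure formula for the augmented model. -/
lemma PmargBar_eq {T K : ℕ} (Q : X → A → X → ℝ) (hQsum : ∀ x a, ∑ x' : X, Q x a x' = 1)
    (f : ℕ → Fin (K + 1) → X → A → X → ℝ) (dbar : Fin T → X × ZVec K → A → ℝ)
    (hd : IsMR dbar) (s : X) (t : Fin T) (xz : X × ZVec K) (a : A) :
    PmargBar T K Q f dbar s t xz a
      = nuM (kAug T K Q f dbar) (s, oneVec K) (t : ℕ) xz * dbar t xz a := by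
  have step := traj_step (S := X × ZVec K) (A := A) T (t : ℕ) (kAug T K Q f dbar)
    (s, oneVec K) t.isLt
    (fun t' _ ht2 y => kAug_sum Q hQsum f dbar hd t' ht2 y)
    (fun y b _ => if y = xz ∧ b = a then (1:ℝ) else 0)
  have lhs_eq : PmargBar T K Q f dbar s t xz a
      = ∑ xzs : Fin (T + 1) → X × ZVec K, ∑ as : Fin T → A,
          traj T (kAug T K Q f dbar) (s, oneVec K) xzs as
            * (if xzs ⟨(t : ℕ), by omega⟩ = xz ∧ as ⟨(t : ℕ), t.isLt⟩ = a
                then (1:ℝ) else 0) := by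
    unfold PmargBar
    refine Finset.sum_congr rfl fun xzs _ => Finset.sum_congr rfl fun as _ => ?_
    rw [trajProbBar_eq_traj]
    have hcs : xzs t.castSucc = xzs ⟨(t : ℕ), by omega⟩ := rfl
    have hat : as t = as ⟨(t : ℕ), t.isLt⟩ := rfl
    rw [hcs, hat]
    by_cases hc : xzs ⟨(t : ℕ), by omega⟩ = xz ∧ as ⟨(t : ℕ), t.isLt⟩ = a
    · rw [if_pos hc, if_pos hc, mul_one]
    · rw [if_neg hc, if_neg hc, mul_zero]
  rw [lhs_eq, step]
  calc ∑ y : X × ZVec K, ∑ b : A, ∑ y' : X × ZVec K,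
          nuM (kAug T K Q f dbar) (s, oneVec K) (t : ℕ) y
            * kAug T K Q f dbar (t : ℕ) y b y' * (if y = xz ∧ b = a then (1:ℝ) else 0)
      = ∑ y : X × ZVec K, ∑ b : A,
          (nuM (kAug T K Q f dbar) (s, oneVec K) (t : ℕ) y * dbar t y b)
            * (if y = xz ∧ b = a then (1:ℝ) else 0) := by
        refine Finset.sum_congr rfl fun y _ => Finset.sum_congr rfl fun b _ => ?_
        rw [← Finset.sum_mul]
        congr 1
        have : ∀ y' : X × ZVec K, nuM (kAug T K Q f dbar) (s, oneVec K) (t : ℕ) y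
            * kAug T K Q f dbar (t : ℕ) y b y'
            = nuM (kAug T K Q f dbar) (s, oneVec K) (t : ℕ) y
              * ((if h : (t : ℕ) < T then dbar ⟨(t : ℕ), h⟩ y b else 0)
                * Qbar K Q f ((t : ℕ) + 1) y.1 y.2 b y'.1 y'.2) := fun y' => rfl
        rw [Finset.sum_congr rfl fun y' _ => this y', ← Finset.mul_sum, ← Finset.mul_sum,
          Qbar_sum Q hQsum f ((t : ℕ) + 1) y.1 y.2 b, mul_one, dif_pos t.isLt, Fin.eta]
    _ = nuM (kAug T K Q f dbar) (s, oneVec K) (t : ℕ) xz * dbar t xz a := by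
        simp [ite_and, mul_ite, Finset.sum_ite_eq']

/-- Terminal occupation-measure formula for the augmented model. -/
lemma PmargBarT_eq {T K : ℕ} (Q : X → A → X → ℝ)
    (f : ℕ → Fin (K + 1) → X → A → X → ℝ) (dbar : Fin T → X × ZVec K → A → ℝ)
    (s : X) (xz : X × ZVec K) :
    PmargBarT T K Q f dbar s xz = nuM (kAug T K Q f dbar) (s, oneVec K) T xz := by
  have step := traj_last (S := X × ZVec K) (A := A) T (kAug T K Q f dbar) (s, oneVec K)
    (fun y => if y = xz then (1:ℝ) else 0)
  have lhs_eq : PmargBarT T K Q f dbar s xz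
      = ∑ xzs : Fin (T + 1) → X × ZVec K, ∑ as : Fin T → A,
          traj T (kAug T K Q f dbar) (s, oneVec K) xzs as
            * (if xzs (Fin.last T) = xz then (1:ℝ) else 0) := by
    unfold PmargBarT
    refine Finset.sum_congr rfl fun xzs _ => Finset.sum_congr rfl fun as _ => ?_
    rw [trajProbBar_eq_traj]
    by_cases hc : xzs (Fin.last T) = xz
    · rw [if_pos hc, if_pos hc, mul_one]
    · rw [if_neg hc, if_neg hc, mul_zero]
  rw [lhs_eq, step]
  simp [mul_ite, Finset.sum_ite_eq']

/-- Expected-cost formula for the original model. -/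
lemma wcost_eq {T K : ℕ} (Q : X → A → X → ℝ) (hQsum : ∀ x a, ∑ x' : X, Q x a x' = 1)
    (r f : ℕ → Fin (K + 1) → X → A → X → ℝ) (α : Fin (K + 1) → ℝ)
    (d : Fin T → X → A → ℝ) (hd : IsMR d) (s : X) (i : Fin (K + 1)) :
    wcost T Q r f α d s i
      = (∑ t : Fin T, ∑ x : X, ∑ a : A,
          rbar Q r (t : ℕ) i x a * (nuM (kOrig T Q d) s (t : ℕ) x * d t x a))
        + α i * ∑ x : X, nuM (kMul T Q f i d) s T x := by
  have split : wcost T Q r f α d s i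
      = (∑ xs : Fin (T + 1) → X, ∑ as : Fin T → A, ∑ t : Fin T,
          traj T (kOrig T Q d) s xs as * r (t : ℕ) i (xs t.castSucc) (as t) (xs t.succ))
        + α i * ∑ xs : Fin (T + 1) → X, ∑ as : Fin T → A,
          traj T (kOrig T Q d) s xs as
            * ∏ t : Fin T, f (t : ℕ) i (xs t.castSucc) (as t) (xs t.succ) := by
    unfold wcost
    have pointwise : ∀ (xs : Fin (T + 1) → X) (as : Fin T → A),
        trajProb T Q d s xs as *
          ((∑ t : Fin T, r (t : ℕ) i (xs t.castSucc) (as t) (xs t.succ)) +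
            α i * ∏ t : Fin T, f (t : ℕ) i (xs t.castSucc) (as t) (xs t.succ))
        = (∑ t : Fin T,
            traj T (kOrig T Q d) s xs as * r (t : ℕ) i (xs t.castSucc) (as t) (xs t.succ))
          + α i * (traj T (kOrig T Q d) s xs as
            * ∏ t : Fin T, f (t : ℕ) i (xs t.castSucc) (as t) (xs t.succ)) := by
      intro xs as
      rw [trajProb_eq_traj, mul_add, Finset.mul_sum]
      ring_nf
    rw [Finset.sum_congr rfl fun xs _ => Finset.sum_congr rfl fun as _ => pointwise xs as]
    rw [Finset.sum_congr rfl fun xs (_ : xs ∈ Finset.univ) => Finset.sum_add_distrib,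
      Finset.sum_add_distrib]
    congr 1
    rw [Finset.mul_sum]
    refine Finset.sum_congr rfl fun xs _ => ?_
    rw [Finset.mul_sum]
  rw [split]
  congr 1
  · -- additive part
    calc ∑ xs : Fin (T + 1) → X, ∑ as : Fin T → A, ∑ t : Fin T,
            traj T (kOrig T Q d) s xs as * r (t : ℕ) i (xs t.castSucc) (as t) (xs t.succ)
        = ∑ t : Fin T, ∑ xs : Fin (T + 1) → X, ∑ as : Fin T → A,
            traj T (kOrig T Q d) s xs as
              * r (t : ℕ) i (xs t.castSucc) (as t) (xs t.succ) := by
          rw [swap3 (fun (xs : Fin (T+1) → X) (as : Fin T → A) (t : Fin T) =>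
            traj T (kOrig T Q d) s xs as
              * r (t : ℕ) i (xs t.castSucc) (as t) (xs t.succ))]
      _ = ∑ t : Fin T, ∑ x : X, ∑ a : A,
            rbar Q r (t : ℕ) i x a * (nuM (kOrig T Q d) s (t : ℕ) x * d t x a) := by
          refine Finset.sum_congr rfl fun t _ => ?_
          have step := traj_step (S := X) (A := A) T (t : ℕ) (kOrig T Q d) s t.isLt
            (fun t' _ ht2 y => kOrig_sum Q hQsum d hd t' ht2 y)
            (r (t : ℕ) i)
          have lhs_eq : (∑ xs : Fin (T + 1) → X, ∑ as : Fin T → A,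
              traj T (kOrig T Q d) s xs as
                * r (t : ℕ) i (xs t.castSucc) (as t) (xs t.succ))
              = ∑ xs : Fin (T + 1) → X, ∑ as : Fin T → A,
                traj T (kOrig T Q d) s xs as
                  * r (t : ℕ) i (xs ⟨(t : ℕ), by omega⟩) (as ⟨(t : ℕ), t.isLt⟩)
                    (xs ⟨(t : ℕ) + 1, by omega⟩) := rfl
          rw [lhs_eq, step]
          refine Finset.sum_congr rfl fun x _ => Finset.sum_congr rfl fun a _ => ?_
          have : ∀ x' : X, nuM (kOrig T Q d) s (t : ℕ) x * kOrig T Q d (t : ℕ) x a x'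
              * r (t : ℕ) i x a x'
              = (nuM (kOrig T Q d) s (t : ℕ) x * d t x a) * (r (t : ℕ) i x a x' * Q x a x') := by
            intro x'
            show nuM (kOrig T Q d) s (t : ℕ) x
              * ((if h : (t : ℕ) < T then d ⟨(t : ℕ), h⟩ x a else 0) * Q x a x')
              * r (t : ℕ) i x a x' = _
            rw [dif_pos t.isLt, Fin.eta]
            ring
          rw [Finset.sum_congr rfl fun x' _ => this x', ← Finset.mul_sum]
          unfold rbar
          ring
  · -- multiplicative part
    congr 1
    have prodmerge : ∀ (xs : Fin (T + 1) → X) (as : Fin T → A),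
        traj T (kOrig T Q d) s xs as
            * ∏ t : Fin T, f (t : ℕ) i (xs t.castSucc) (as t) (xs t.succ)
          = traj T (kMul T Q f i d) s xs as * 1 := by
      intro xs as
      unfold traj kOrig kMul
      rw [mul_one, mul_assoc, ← Finset.prod_mul_distrib]
    rw [Finset.sum_congr rfl fun xs _ => Finset.sum_congr rfl fun as _ => prodmerge xs as]
    rw [traj_last (S := X) (A := A) T (kMul T Q f i d) s (fun _ => 1)]
    simp

lemma IsMR_lift {T K : ℕ} (d : Fin T → X → A → ℝ) (hd : IsMR d) :
    IsMR (fun (t : Fin T) (xz : X × ZVec K) (a : A) => d t xz.1 a) :=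
  fun t xz => hd t xz.1

/-- The BLP functional evaluated at the occupation measures of a lifted policy. -/
lemma BLPlin_occ {T K : ℕ} (Q : X → A → X → ℝ) (hQsum : ∀ x a, ∑ x' : X, Q x a x' = 1)
    (f r : ℕ → Fin (K + 1) → X → A → X → ℝ) (α : Fin (K + 1) → ℝ)
    (d : Fin T → X → A → ℝ) (hd : IsMR d) (s : X) (i : Fin (K + 1)) :
    BLPlin T K Q r α i
        (fun t xz a => PmargBar T K Q f (fun t xz a => d t xz.1 a) s t xz a)
        (fun xz => PmargBarT T K Q f (fun t xz a => d t xz.1 a) s xz)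
      = wcost T Q r f α d s i := by
  unfold BLPlin
  rw [wcost_eq Q hQsum r f α d hd s i]
  congr 1
  · refine Finset.sum_congr rfl fun t _ => ?_
    calc ∑ xz : X × ZVec K, ∑ a : A, rbar Q r (t : ℕ) i xz.1 a
            * PmargBar T K Q f (fun t xz a => d t xz.1 a) s t xz a
        = ∑ xz : X × ZVec K, ∑ a : A, rbar Q r (t : ℕ) i xz.1 a
            * (nuM (kAug T K Q f (fun t xz a => d t xz.1 a)) (s, oneVec K) (t : ℕ) xz
              * d t xz.1 a) := by
          refine Finset.sum_congr rfl fun xz _ => Finset.sum_congr rfl fun a _ => ?_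
          rw [PmargBar_eq Q hQsum f _ (IsMR_lift d hd) s t xz a]
      _ = ∑ x : X, ∑ z : ZVec K, ∑ a : A, rbar Q r (t : ℕ) i x a
            * (nuM (kAug T K Q f (fun t xz a => d t xz.1 a)) (s, oneVec K) (t : ℕ) (x, z)
              * d t x a) := by
          rw [Fintype.sum_prod_type]
      _ = ∑ x : X, ∑ a : A, ∑ z : ZVec K, rbar Q r (t : ℕ) i x a
            * (nuM (kAug T K Q f (fun t xz a => d t xz.1 a)) (s, oneVec K) (t : ℕ) (x, z)
              * d t x a) := Finset.sum_congr rfl fun x _ => swap12 _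
      _ = ∑ x : X, ∑ a : A, rbar Q r (t : ℕ) i x a
            * (nuM (kOrig T Q d) s (t : ℕ) x * d t x a) := by
          refine Finset.sum_congr rfl fun x _ => Finset.sum_congr rfl fun a _ => ?_
          have : ∀ z : ZVec K, rbar Q r (t : ℕ) i x a
              * (nuM (kAug T K Q f (fun t xz a => d t xz.1 a)) (s, oneVec K) (t : ℕ) (x, z)
                * d t x a)
              = nuM (kAug T K Q f (fun t xz a => d t xz.1 a)) (s, oneVec K) (t : ℕ) (x, z)
                * (rbar Q r (t : ℕ) i x a * d t x a) := fun z => by ring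
          rw [Finset.sum_congr rfl fun z _ => this z, ← Finset.sum_mul,
            nu_aug_marg Q f d s (t : ℕ) x]
          ring
  · calc ∑ xz : X × ZVec K, α i * ((xz.2 i : ℕ) : ℝ)
            * PmargBarT T K Q f (fun t xz a => d t xz.1 a) s xz
        = ∑ x : X, ∑ z : ZVec K, α i * (((z i : ℕ)) : ℝ)
            * nuM (kAug T K Q f (fun t xz a => d t xz.1 a)) (s, oneVec K) T (x, z) := by
          rw [Fintype.sum_prod_type]
          refine Finset.sum_congr rfl fun x _ => Finset.sum_congr rfl fun z _ => ?_
          rw [PmargBarT_eq]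
      _ = α i * ∑ x : X, nuM (kMul T Q f i d) s T x := by
          rw [Finset.mul_sum]
          refine Finset.sum_congr rfl fun x _ => ?_
          rw [← nu_aug_pick Q f d s i T x, Finset.mul_sum]
          exact Finset.sum_congr rfl fun z _ => by ring

lemma trajProbBar_nonneg {T K : ℕ} (Q : X → A → X → ℝ) (hQnn : ∀ x a x', 0 ≤ Q x a x')
    (f : ℕ → Fin (K + 1) → X → A → X → ℝ)
    (hf : ∀ t, t ≤ T - 1 → ∀ i x a x', 0 ≤ f t i x a x' ∧ f t i x a x' ≤ 1)
    (dbar : Fin T → X × ZVec K → A → ℝ) (hdnn : ∀ t xz a, 0 ≤ dbar t xz a) (s : X)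
    (xzs : Fin (T + 1) → X × ZVec K) (as : Fin T → A) :
    0 ≤ trajProbBar T K Q f dbar s xzs as := by
  unfold trajProbBar
  refine mul_nonneg (by positivity) (Finset.prod_nonneg fun t _ => ?_)
  refine mul_nonneg (hdnn t _ _) ?_
  exact Qbar_nonneg Q hQnn f ((t : ℕ) + 1)
    (fun i x a x' => hf (t : ℕ) (by omega) i x a x') _ _ _ _ _

/-- Feasibility of the occupation measures of a lifted Markov policy. -/
lemma occ_feasible {T K : ℕ} (hT : 1 ≤ T) (Q : X → A → X → ℝ)
    (hQnn : ∀ x a x', 0 ≤ Q x a x') (hQsum : ∀ x a, ∑ x' : X, Q x a x' = 1)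
    (f : ℕ → Fin (K + 1) → X → A → X → ℝ)
    (hf : ∀ t, t ≤ T - 1 → ∀ i x a x', 0 ≤ f t i x a x' ∧ f t i x a x' ≤ 1)
    (r : ℕ → Fin (K + 1) → X → A → X → ℝ) (α b : Fin (K + 1) → ℝ) (s : X)
    (d : Fin T → X → A → ℝ) (hd : IsMR d)
    (hcon : ∀ i : Fin (K + 1), 1 ≤ (i : ℕ) → wcost T Q r f α d s i ≤ b i) :
    BLPFeasible T K hT Q f r α b s
      (fun t xz a => PmargBar T K Q f (fun t xz a => d t xz.1 a) s t xz a)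
      (fun xz => PmargBarT T K Q f (fun t xz a => d t xz.1 a) s xz) := by
  have hdnn : ∀ (t : Fin T) (xz : X × ZVec K) (a : A), 0 ≤ d t xz.1 a :=
    fun t xz a => (hd t xz.1).1 a
  have hnuM : ∀ (t : Fin T) (xz : X × ZVec K),
      ∑ a : A, PmargBar T K Q f (fun t xz a => d t xz.1 a) s t xz a
        = nuM (kAug T K Q f (fun t xz a => d t xz.1 a)) (s, oneVec K) (t : ℕ) xz := by
    intro t xz
    rw [Finset.sum_congr rfl fun a _ =>
      PmargBar_eq Q hQsum f _ (IsMR_lift d hd) s t xz a, ← Finset.mul_sum,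
      (hd t xz.1).2, mul_one]
  refine ⟨?_, ?_, ?_, ?_, ?_, ?_, ?_⟩
  · intro t xz a
    refine Finset.sum_nonneg fun xzs _ => Finset.sum_nonneg fun as _ => ?_
    split_ifs
    · exact trajProbBar_nonneg Q hQnn f hf _ (fun t xz a => hdnn t xz a) s xzs as
    · exact le_refl 0
  · intro xz
    refine Finset.sum_nonneg fun xzs _ => Finset.sum_nonneg fun as _ => ?_
    split_ifs
    · exact trajProbBar_nonneg Q hQnn f hf _ (fun t xz a => hdnn t xz a) s xzs as
    · exact le_refl 0
  · intro xz
    rw [hnuM ⟨0, hT⟩ xz]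
    rfl
  · intro t ht xz
    have hidx : ((t : ℕ) - 1) + 1 = (t : ℕ) := by omega
    have ht1 : (t : ℕ) - 1 < T := by omega
    rw [hnuM t xz]
    calc nuM (kAug T K Q f (fun t xz a => d t xz.1 a)) (s, oneVec K) (t : ℕ) xz
        = nuM (kAug T K Q f (fun t xz a => d t xz.1 a)) (s, oneVec K) (((t : ℕ) - 1) + 1) xz := by
          rw [hidx]
      _ = ∑ xz' : X × ZVec K, ∑ a : A,
            nuM (kAug T K Q f (fun t xz a => d t xz.1 a)) (s, oneVec K) ((t : ℕ) - 1) xz'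
              * kAug T K Q f (fun t xz a => d t xz.1 a) ((t : ℕ) - 1) xz' a xz := rfl
      _ = ∑ xz' : X × ZVec K, ∑ a : A,
            Qbar K Q f (t : ℕ) xz'.1 xz'.2 a xz.1 xz.2
              * PmargBar T K Q f (fun t xz a => d t xz.1 a) s
                ⟨(t : ℕ) - 1, lt_of_le_of_lt (Nat.sub_le _ _) t.isLt⟩ xz' a := by
          refine Finset.sum_congr rfl fun xz' _ => Finset.sum_congr rfl fun a _ => ?_
          rw [PmargBar_eq Q hQsum f _ (IsMR_lift d hd) s _ xz' a]
          show nuM _ _ ((t : ℕ) - 1) xz'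
              * ((if h : (t : ℕ) - 1 < T then d ⟨(t : ℕ) - 1, h⟩ xz'.1 a else 0)
                * Qbar K Q f (((t : ℕ) - 1) + 1) xz'.1 xz'.2 a xz.1 xz.2) = _
          rw [dif_pos ht1, hidx]
          ring
  · intro xz
    beta_reduce
    have hidx : (T - 1) + 1 = T := by omega
    have ht1 : T - 1 < T := by omega
    rw [PmargBarT_eq]
    calc nuM (kAug T K Q f (fun t xz a => d t xz.1 a)) (s, oneVec K) T xz
        = nuM (kAug T K Q f (fun t xz a => d t xz.1 a)) (s, oneVec K) ((T - 1) + 1) xz := by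
          rw [hidx]
      _ = ∑ xz' : X × ZVec K, ∑ a : A,
            nuM (kAug T K Q f (fun t xz a => d t xz.1 a)) (s, oneVec K) (T - 1) xz'
              * kAug T K Q f (fun t xz a => d t xz.1 a) (T - 1) xz' a xz := rfl
      _ = ∑ xz' : X × ZVec K, ∑ a : A,
            Qbar K Q f T xz'.1 xz'.2 a xz.1 xz.2
              * PmargBar T K Q f (fun t xz a => d t xz.1 a) s ⟨T - 1, by omega⟩ xz' a := by
          refine Finset.sum_congr rfl fun xz' _ => Finset.sum_congr rfl fun a _ => ?_
          rw [PmargBar_eq Q hQsum f _ (IsMR_lift d hd) s _ xz' a]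
          show nuM _ _ (T - 1) xz'
              * ((if h : T - 1 < T then d ⟨T - 1, h⟩ xz'.1 a else 0)
                * Qbar K Q f ((T - 1) + 1) xz'.1 xz'.2 a xz.1 xz.2) = _
          have hQ : Qbar K Q f ((T - 1) + 1) xz'.1 xz'.2 a xz.1 xz.2
              = Qbar K Q f T xz'.1 xz'.2 a xz.1 xz.2 := by rw [hidx]
          rw [dif_pos ht1, hQ]
          ring
  · intro i hi
    rw [BLPlin_occ Q hQsum f r α d hd s i]
    exact hcon i hi
  · intro t x z a
    beta_reduce
    rw [PmargBar_eq Q hQsum f _ (IsMR_lift d hd) s t (x, z) a,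
      PmargBar_eq Q hQsum f _ (IsMR_lift d hd) s t (x, oneVec K) a,
      Finset.sum_congr rfl fun a' (_ : a' ∈ Finset.univ) =>
        PmargBar_eq Q hQsum f _ (IsMR_lift d hd) s t (x, oneVec K) a',
      Finset.sum_congr rfl fun a' (_ : a' ∈ Finset.univ) =>
        PmargBar_eq Q hQsum f _ (IsMR_lift d hd) s t (x, z) a',
      ← Finset.mul_sum, ← Finset.mul_sum]
    ring

end App

/-- Let `(w*, w*_T)` be a minimizer of the BLP objective over the feasible region `𝒬`, with
`Σ_{a'} w*_t((x,𝟏),a') > 0` for all `t < T` and `x ∈ 𝒳`. Then the normalized policy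
`π* = (d*_t)` with `d*_t(a|x) = w*_t((x,𝟏),a) / Σ_{a'} w*_t((x,𝟏),a')` belongs to `Π_MR`
and is an optimizer of the original constrained problem (P). -/
theorem BLP_minimizer_gives_optimal_policy {X A : Type*}
    [Fintype X] [Fintype A] [Nonempty X] [Nonempty A]
    [DecidableEq X] [DecidableEq A]
    (T K : ℕ) (hT : 1 ≤ T)
    (Q : X → A → X → ℝ)
    (hQnn : ∀ x a x', 0 ≤ Q x a x') (hQle : ∀ x a x', Q x a x' ≤ 1)
    (hQsum : ∀ x a, ∑ x' : X, Q x a x' = 1)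
    (f : ℕ → Fin (K + 1) → X → A → X → ℝ)
    (hf : ∀ t, t ≤ T - 1 → ∀ i x a x', 0 ≤ f t i x a x' ∧ f t i x a x' ≤ 1)
    (r : ℕ → Fin (K + 1) → X → A → X → ℝ) (α b : Fin (K + 1) → ℝ)
    (s : X)
    (w : Fin T → X × ZVec K → A → ℝ) (wT : X × ZVec K → ℝ)
    (hfeas : BLPFeasible T K hT Q f r α b s w wT)
    (hmin : ∀ (w' : Fin T → X × ZVec K → A → ℝ) (wT' : X × ZVec K → ℝ),
      BLPFeasible T K hT Q f r α b s w' wT' →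
        BLPlin T K Q r α 0 w wT ≤ BLPlin T K Q r α 0 w' wT')
    (hpos : ∀ (t : Fin T) (x : X), 0 < ∑ a' : A, w t (x, oneVec K) a')
    (dstar : Fin T → X → A → ℝ)
    (hdstar : ∀ (t : Fin T) (x : X) (a : A),
      dstar t x a = w t (x, oneVec K) a / ∑ a' : A, w t (x, oneVec K) a') :
    IsMR dstar ∧
    (∀ i : Fin (K + 1), 1 ≤ (i : ℕ) → wcost T Q r f α dstar s i ≤ b i) ∧
    (∀ d : Fin T → X → A → ℝ, IsMR d →
      (∀ i : Fin (K + 1), 1 ≤ (i : ℕ) → wcost T Q r f α d s i ≤ b i) →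
      wcost T Q r f α dstar s 0 ≤ wcost T Q r f α d s 0) := by
  obtain ⟨hnnw, hnnwT, hinit, hflow, hterm, hcons, hind⟩ := hfeas
  -- π* is a Markov randomized policy
  have hMR : IsMR dstar := by
    intro t x
    constructor
    · intro a
      rw [hdstar]
      exact div_nonneg (hnnw t (x, oneVec K) a) (le_of_lt (hpos t x))
    · rw [Finset.sum_congr rfl fun a _ => hdstar t x a, ← Finset.sum_div,
        div_self (ne_of_gt (hpos t x))]
  -- structure of w from the indifference constraints
  have wz : ∀ (t : Fin T) (xz : X × ZVec K) (a : A),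
      w t xz a = dstar t xz.1 a * ∑ a' : A, w t xz a' := by
    intro t xz a
    have h := hind t xz.1 xz.2 a
    rw [hdstar, div_mul_eq_mul_div, eq_div_iff (ne_of_gt (hpos t xz.1))]
    exact h
  -- forward marginals of w
  have hM : ∀ (n : ℕ) (hn : n < T) (xz : X × ZVec K),
      (∑ a : A, w ⟨n, hn⟩ xz a)
        = nuM (kAug T K Q f (fun t xz a => dstar t xz.1 a)) (s, oneVec K) n xz := by
    intro n
    induction n with
    | zero =>
      intro hn xz
      exact hinit xz
    | succ n ih =>
      intro hn xz
      have hn' : n < T := by omega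
      have hfl := hflow ⟨n + 1, hn⟩ (Nat.succ_le_succ (Nat.zero_le n)) xz
      rw [hfl]
      show (∑ xz' : X × ZVec K, ∑ a : A, Qbar K Q f (n+1) xz'.1 xz'.2 a xz.1 xz.2
          * w ⟨n, hn'⟩ xz' a) = ∑ xz' : X × ZVec K, ∑ a : A,
          nuM (kAug T K Q f (fun t xz a => dstar t xz.1 a)) (s, oneVec K) n xz'
            * kAug T K Q f (fun t xz a => dstar t xz.1 a) n xz' a xz
      refine Finset.sum_congr rfl fun xz' _ => Finset.sum_congr rfl fun a _ => ?_
      rw [wz ⟨n, hn'⟩ xz' a, ih hn' xz']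
      show _ = _ * ((if h : n < T then dstar ⟨n, h⟩ xz'.1 a else 0)
        * Qbar K Q f (n + 1) xz'.1 xz'.2 a xz.1 xz.2)
      rw [dif_pos hn']
      ring
  -- w is the occupation measure of the lifted π*
  have w_eq : w = fun t xz a =>
      PmargBar T K Q f (fun t xz a => dstar t xz.1 a) s t xz a := by
    funext t xz a
    rw [PmargBar_eq Q hQsum f _ (IsMR_lift dstar hMR) s t xz a, wz t xz a,
      hM (t : ℕ) t.isLt xz]
    ring
  have wT_eq : wT = fun xz => PmargBarT T K Q f (fun t xz a => dstar t xz.1 a) s xz := by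
    funext xz
    rw [PmargBarT_eq, hterm xz]
    have hidx : (T - 1) + 1 = T := by omega
    have ht1 : T - 1 < T := by omega
    calc ∑ xz' : X × ZVec K, ∑ a : A, Qbar K Q f T xz'.1 xz'.2 a xz.1 xz.2
            * w ⟨T - 1, by omega⟩ xz' a
        = ∑ xz' : X × ZVec K, ∑ a : A,
            nuM (kAug T K Q f (fun t xz a => dstar t xz.1 a)) (s, oneVec K) (T - 1) xz'
              * kAug T K Q f (fun t xz a => dstar t xz.1 a) (T - 1) xz' a xz := by
          refine Finset.sum_congr rfl fun xz' _ => Finset.sum_congr rfl fun a _ => ?_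
          rw [wz ⟨T - 1, by omega⟩ xz' a, hM (T - 1) ht1 xz']
          show _ = _ * ((if h : T - 1 < T then dstar ⟨T - 1, h⟩ xz'.1 a else 0)
            * Qbar K Q f ((T - 1) + 1) xz'.1 xz'.2 a xz.1 xz.2)
          have hQ : Qbar K Q f ((T - 1) + 1) xz'.1 xz'.2 a xz.1 xz.2
              = Qbar K Q f T xz'.1 xz'.2 a xz.1 xz.2 := by rw [hidx]
          rw [dif_pos ht1, hQ]
          ring
      _ = nuM (kAug T K Q f (fun t xz a => dstar t xz.1 a)) (s, oneVec K) ((T - 1) + 1) xz :=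
          rfl
      _ = nuM (kAug T K Q f (fun t xz a => dstar t xz.1 a)) (s, oneVec K) T xz := by
          rw [hidx]
  -- value identification
  have key : ∀ i : Fin (K + 1), BLPlin T K Q r α i w wT = wcost T Q r f α dstar s i := by
    intro i
    rw [w_eq, wT_eq]
    exact BLPlin_occ Q hQsum f r α dstar hMR s i
  refine ⟨hMR, ?_, ?_⟩
  · intro i hi
    rw [← key i]
    exact hcons i hi
  · intro d hd hcon
    have feas := occ_feasible hT Q hQnn hQsum f hf r α b s d hd hcon
    have hle := hmin _ _ feas
    rw [key 0] at hle
    rwa [BLPlin_occ Q hQsum f r α d hd s 0] at hle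
end
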